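/- arXiv:0803.3764 — 11 statements merged into one kernel-verified Lean document; each statement's English description precedes it below -/
import Mathlib

section
/- Let p be a prime and let λ be a partition of d with at most n parts. Then λ satisfies the Doty digit condition (for p) if and only if every partition μ of d with at most n parts having the same carry pattern as λ (i.e. c_i(μ) = c_i(λ) for all i ≥ 1) satisfies μ ⊴ λ. (Combinatorial form of Lemma 4.4(a): by Doty's theorem this is exactly the criterion for L(λ) to be a composition factor of the symmetric power H^0(d).) -/
/-!
Add the parts of a tuple column by column in base `p`. For two tuples with the same sum, equal
carry patterns amount to equal column digit sums, and `μ ⊴ λ` holds as soon as, in every column,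
the digits of the first `k` parts of `μ` sum to at most those of `λ`. Under Doty's condition each
column of `λ` is, within any first `k` parts, either all `p - 1` or already complete, so `λ`
maximises every such prefix column sum. If the condition fails at parts `i < i'` in column `j`,
refilling every column of `λ` greedily (`p - 1` in each part from the top) gives a partition `μ`
with the same column sums whose first `i + 1` parts beat those of `λ` in column `j` and lose
nowhere, so `μ ⋬ λ`.
-/

/-- `l` is a partition of `d` with at most `n` parts: a weakly decreasing tuple
(indexed from 0, vanishing from index `n` on) of nonnegative integers summing to `d`. -/
def IsPartition (n d : ℕ) (l : ℕ → ℕ) : Prop :=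
  Antitone l ∧ (∀ i, n ≤ i → l i = 0) ∧ ∑ i ∈ Finset.range n, l i = d

/-- Doty digit condition: if the `j`-th base-`p` digit of the `i`-th part is not `p - 1`,
then the `j`-th digit of every later part is `0`. -/
def DotyCondition (p : ℕ) (l : ℕ → ℕ) : Prop :=
  ∀ i j i', i < i' → (l i / p ^ j) % p ≠ p - 1 → (l i' / p ^ j) % p = 0

/-- `carry p n β i` is `c_{i+1}(β)`, the amount carried past the `p^(i+1)`-column when
`β 0, …, β (n-1)` are added in base `p`. -/
def carry (p n : ℕ) (β : ℕ → ℕ) (i : ℕ) : ℕ :=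
  (∑ j ∈ Finset.range n, β j % p ^ (i + 1)) / p ^ (i + 1)

/-- `Dominates l m` : `l` dominates `m`, i.e. `m ⊴ l`. -/
def Dominates (l m : ℕ → ℕ) : Prop :=
  ∀ k, ∑ i ∈ Finset.range k, m i ≤ ∑ i ∈ Finset.range k, l i

open Finset

def columnSum (p k : ℕ) (β : ℕ → ℕ) (t : ℕ) : ℕ :=
  ∑ i ∈ range k, β i / p ^ t % p

section ColumnSums

variable {p : ℕ}

theorem sum_mod_pow_eq_sum_columnSum (k : ℕ) (β : ℕ → ℕ) (m : ℕ) :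
    ∑ i ∈ range k, β i % p ^ m = ∑ t ∈ range m, p ^ t * columnSum p k β t := by
  induction m with
  | zero => simp [Nat.mod_one]
  | succ m ih =>
    simp only [Nat.mod_pow_succ, sum_add_distrib, ih, sum_range_succ, columnSum, mul_sum]

theorem sum_eq_sum_columnSum_of_lt_pow {k J : ℕ} {β : ℕ → ℕ} (h : ∀ i < k, β i < p ^ J) :
    ∑ i ∈ range k, β i = ∑ t ∈ range J, p ^ t * columnSum p k β t := by
  rw [← sum_mod_pow_eq_sum_columnSum]
  exact sum_congr rfl fun i hi => (Nat.mod_eq_of_lt (h i (mem_range.1 hi))).symm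

theorem carry_eq_of_columnSum_eq {n : ℕ} {β γ : ℕ → ℕ}
    (h : ∀ t, columnSum p n β t = columnSum p n γ t) (m : ℕ) :
    carry p n β m = carry p n γ m := by
  simp only [carry, sum_mod_pow_eq_sum_columnSum, h]

theorem columnSum_eq_of_carry_eq (hp : 0 < p) {n : ℕ} {β γ : ℕ → ℕ}
    (hsum : ∑ i ∈ range n, β i = ∑ i ∈ range n, γ i)
    (h : ∀ m, carry p n β m = carry p n γ m) (t : ℕ) :
    columnSum p n β t = columnSum p n γ t := by
  -- the truncated sum `∑ β i % p ^ (m+1)` is recovered from its carry and from `∑ β i`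
  have hmod : ∀ (α : ℕ → ℕ) m, ∑ i ∈ range n, α i % p ^ (m + 1) =
      p ^ (m + 1) * carry p n α m + (∑ i ∈ range n, α i) % p ^ (m + 1) := by
    intro α m
    rw [carry, sum_nat_mod, Nat.div_add_mod]
  have htrunc : ∀ m, ∑ i ∈ range n, β i % p ^ m = ∑ i ∈ range n, γ i % p ^ m := by
    rintro (_ | m)
    · simp [Nat.mod_one]
    · rw [hmod, hmod, h, hsum]
  have hexpansion (m : ℕ) : ∑ s ∈ range m, p ^ s * columnSum p n β s =
      ∑ s ∈ range m, p ^ s * columnSum p n γ s := by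
    simpa only [sum_mod_pow_eq_sum_columnSum] using htrunc m
  have hstep := hexpansion (t + 1)
  rw [sum_range_succ, sum_range_succ, hexpansion t, add_right_inj] at hstep
  exact Nat.eq_of_mul_eq_mul_left (pow_pos hp t) hstep

theorem columnSum_mono {k k' : ℕ} (hk : k ≤ k') (β : ℕ → ℕ) (t : ℕ) :
    columnSum p k β t ≤ columnSum p k' β t :=
  sum_le_sum_of_subset (range_subset_range.2 hk)

theorem columnSum_eq_of_digit_eq_zero {k k' : ℕ} (hk : k ≤ k') {β : ℕ → ℕ} {t : ℕ}
    (h : ∀ i, k ≤ i → β i / p ^ t % p = 0) :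
    columnSum p k' β t = columnSum p k β t :=
  (sum_subset (range_subset_range.2 hk) fun i _ hi => h i (by simpa using hi)).symm

theorem columnSum_le_mul (hp : 0 < p) (k : ℕ) (β : ℕ → ℕ) (t : ℕ) :
    columnSum p k β t ≤ k * (p - 1) := by
  simpa [columnSum] using sum_le_sum fun i (_ : i ∈ range k) =>
    Nat.le_sub_one_of_lt (Nat.mod_lt (β i / p ^ t) hp)

theorem columnSum_lt_mul_of_digit_ne (hp : 0 < p) {β : ℕ → ℕ} {i t : ℕ}
    (h : β i / p ^ t % p ≠ p - 1) : columnSum p (i + 1) β t < (i + 1) * (p - 1) := by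
  have hprefix := columnSum_le_mul hp i β t
  have hdigit := Nat.le_sub_one_of_lt (Nat.mod_lt (β i / p ^ t) hp)
  rw [columnSum, sum_range_succ, ← columnSum, add_one_mul]
  omega

theorem columnSum_lt_of_digit_ne_zero {β : ℕ → ℕ} {k i n t : ℕ} (hki : k ≤ i) (hin : i < n)
    (h : β i / p ^ t % p ≠ 0) : columnSum p k β t < columnSum p n β t :=
  calc columnSum p k β t ≤ columnSum p i β t := columnSum_mono hki β t
    _ < columnSum p (i + 1) β t := by
      simp only [columnSum, sum_range_succ]
      omega
    _ ≤ columnSum p n β t := columnSum_mono hin β t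

end ColumnSums

theorem dominates_of_columnSum_le {p : ℕ} (hp : 1 < p) {lam mu : ℕ → ℕ}
    (h : ∀ k t, columnSum p k mu t ≤ columnSum p k lam t) : Dominates lam mu := by
  intro k
  set J := ∑ i ∈ range k, (lam i + mu i)
  have hJ : ∀ i < k, lam i + mu i < p ^ J := fun i hi =>
    (single_le_sum (f := fun i => lam i + mu i) (fun _ _ => Nat.zero_le _)
      (mem_range.2 hi)).trans_lt (Nat.lt_pow_self hp)
  rw [sum_eq_sum_columnSum_of_lt_pow fun i hi => (Nat.le_add_right _ _).trans_lt (hJ i hi),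
    sum_eq_sum_columnSum_of_lt_pow fun i hi => (Nat.le_add_left _ _).trans_lt (hJ i hi)]
  exact sum_le_sum fun t _ => Nat.mul_le_mul_left _ (h k t)

theorem columnSum_le_of_dotyCondition {p n : ℕ} (hp : 0 < p) {lam mu : ℕ → ℕ}
    (hdoty : DotyCondition p lam) (hlam : ∀ i, n ≤ i → lam i = 0) (hmu : ∀ i, n ≤ i → mu i = 0)
    {t : ℕ} (hcol : columnSum p n mu t = columnSum p n lam t) (k : ℕ) :
    columnSum p k mu t ≤ columnSum p k lam t := by
  by_cases hfull : ∀ i < k, lam i / p ^ t % p = p - 1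
  · calc columnSum p k mu t ≤ k * (p - 1) := columnSum_le_mul hp k mu t
      _ = columnSum p k lam t := by
        simp [columnSum, sum_congr rfl fun i hi => hfull i (mem_range.1 hi)]
  push Not at hfull
  obtain ⟨i₀, hi₀k, hi₀⟩ := hfull
  have hvanish : ∀ (β : ℕ → ℕ), (∀ i, n ≤ i → β i = 0) → ∀ i, n ≤ i → β i / p ^ t % p = 0 :=
    fun β hβ i hi => by simp [hβ i hi]
  calc columnSum p k mu t ≤ columnSum p (max k n) mu t := columnSum_mono (le_max_left k n) mu t
    _ = columnSum p n mu t := columnSum_eq_of_digit_eq_zero (le_max_right k n) (hvanish mu hmu)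
    _ = columnSum p n lam t := hcol
    _ = columnSum p (max k n) lam t :=
      (columnSum_eq_of_digit_eq_zero (le_max_right k n) (hvanish lam hlam)).symm
    _ = columnSum p k lam t :=
      columnSum_eq_of_digit_eq_zero (le_max_left k n) fun i hi => hdoty i₀ t i (by omega) hi₀

theorem Nat.sum_pow_mul_div_pow_mod {p : ℕ} {c : ℕ → ℕ} (hc : ∀ s, c s < p) {J : ℕ}
    (hJ : ∀ s, J ≤ s → c s = 0) (t : ℕ) : (∑ s ∈ range J, p ^ s * c s) / p ^ t % p = c t := by
  induction J generalizing c t with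
  | zero => simp [hJ t (Nat.zero_le t)]
  | succ J ih =>
    have hp : 0 < p := (Nat.zero_le _).trans_lt (hc 0)
    have hsplit : ∑ s ∈ range (J + 1), p ^ s * c s
        = c 0 + p * ∑ s ∈ range J, p ^ s * c (s + 1) := by
      rw [sum_range_succ', mul_sum, pow_zero, one_mul, add_comm]
      exact congrArg _ (sum_congr rfl fun s _ => by ring)
    rcases t with _ | t
    · simp [hsplit, Nat.mod_eq_of_lt (hc 0)]
    · rw [hsplit, pow_succ', ← Nat.div_div_eq_div_mul, Nat.add_mul_div_left _ _ hp,
        Nat.div_eq_of_lt (hc 0), zero_add]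
      exact ih (fun s => hc (s + 1)) (fun s hs => hJ (s + 1) (by omega)) t

-- the digits `p - 1, …, p - 1, r, 0, 0, …` with sum `a`: a column filled greedily from the top
def greedyDigit (p a i : ℕ) : ℕ :=
  min a ((i + 1) * (p - 1)) - min a (i * (p - 1))

section GreedyDigit

variable (p a : ℕ)

theorem greedyDigit_le (i : ℕ) : greedyDigit p a i ≤ p - 1 := by
  have : (i + 1) * (p - 1) = i * (p - 1) + (p - 1) := by ring
  unfold greedyDigit
  omega

theorem greedyDigit_antitone : Antitone (greedyDigit p a) := by
  refine antitone_nat_of_succ_le fun i => ?_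
  have h₁ : (i + 1) * (p - 1) = i * (p - 1) + (p - 1) := by ring
  have h₂ : (i + 1 + 1) * (p - 1) = i * (p - 1) + (p - 1) + (p - 1) := by ring
  unfold greedyDigit
  omega

theorem sum_greedyDigit (k : ℕ) : ∑ i ∈ range k, greedyDigit p a i = min a (k * (p - 1)) := by
  have hmono : Monotone fun i => min a (i * (p - 1)) := fun i j hij =>
    min_le_min_left a (Nat.mul_le_mul_right _ hij)
  simpa [greedyDigit] using sum_range_tsub hmono k

theorem greedyDigit_eq_zero {i : ℕ} (h : a ≤ i * (p - 1)) : greedyDigit p a i = 0 := by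
  have : i * (p - 1) ≤ (i + 1) * (p - 1) := Nat.mul_le_mul_right _ (Nat.le_succ i)
  simp [greedyDigit, min_eq_left h, min_eq_left (h.trans this)]

end GreedyDigit

def greedyPartition (p : ℕ) (A : ℕ → ℕ) (J i : ℕ) : ℕ :=
  ∑ t ∈ range J, p ^ t * greedyDigit p (A t) i

section GreedyPartition

variable {p : ℕ} {A : ℕ → ℕ} {J : ℕ}

theorem greedyPartition_div_pow_mod (hp : 0 < p) (hA : ∀ t, J ≤ t → A t = 0) (i t : ℕ) :
    greedyPartition p A J i / p ^ t % p = greedyDigit p (A t) i :=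
  Nat.sum_pow_mul_div_pow_mod (fun s => (greedyDigit_le p _ i).trans_lt (Nat.sub_one_lt_of_lt hp))
    (fun s hs => by simp [hA s hs, greedyDigit]) t

theorem columnSum_greedyPartition (hp : 0 < p) (hA : ∀ t, J ≤ t → A t = 0) (k t : ℕ) :
    columnSum p k (greedyPartition p A J) t = min (A t) (k * (p - 1)) := by
  simp only [columnSum, greedyPartition_div_pow_mod hp hA, sum_greedyDigit]

theorem sum_greedyPartition (k : ℕ) :
    ∑ i ∈ range k, greedyPartition p A J i = ∑ t ∈ range J, p ^ t * min (A t) (k * (p - 1)) := by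
  simp only [greedyPartition, ← sum_greedyDigit, mul_sum]
  exact sum_comm

theorem greedyPartition_antitone : Antitone (greedyPartition p A J) := fun _ _ hij =>
  sum_le_sum fun t _ => Nat.mul_le_mul_left _ (greedyDigit_antitone p (A t) hij)

theorem greedyPartition_eq_zero {n : ℕ} (hA : ∀ t, A t ≤ n * (p - 1)) {i : ℕ} (hi : n ≤ i) :
    greedyPartition p A J i = 0 :=
  sum_eq_zero fun t _ => by
    rw [greedyDigit_eq_zero p _ ((hA t).trans (Nat.mul_le_mul_right _ hi)), mul_zero]

end GreedyPartition

theorem IsPartition.le {n d : ℕ} {l : ℕ → ℕ} (hl : IsPartition n d l) (i : ℕ) : l i ≤ d := by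
  rcases lt_or_ge i n with hi | hi
  · exact hl.2.2 ▸ single_le_sum (fun _ _ => Nat.zero_le _) (mem_range.2 hi)
  · simp [hl.2.1 i hi]

theorem exists_not_dominates_of_not_dotyCondition {p n d : ℕ} (hp : 1 < p) {lam : ℕ → ℕ}
    (hlam : IsPartition n d lam) (hnd : ¬ DotyCondition p lam) :
    ∃ mu, IsPartition n d mu ∧ (∀ m, carry p n mu m = carry p n lam m) ∧ ¬ Dominates lam mu := by
  obtain ⟨i, j, i', hii', hi, hi'⟩ :
      ∃ i j i', i < i' ∧ lam i / p ^ j % p ≠ p - 1 ∧ lam i' / p ^ j % p ≠ 0 := by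
    simpa [DotyCondition] using hnd
  have hp₀ : 0 < p := Nat.zero_lt_of_lt hp
  set A := columnSum p n lam
  have hlt : ∀ i, lam i < p ^ d := fun i => (hlam.le i).trans_lt (Nat.lt_pow_self hp)
  have hexpand (k : ℕ) : ∑ i ∈ range k, lam i = ∑ t ∈ range d, p ^ t * columnSum p k lam t :=
    sum_eq_sum_columnSum_of_lt_pow fun i _ => hlt i
  have hAd : ∀ t, d ≤ t → A t = 0 := fun t ht => sum_eq_zero fun i _ => by
    rw [Nat.div_eq_of_lt ((hlt i).trans_le (Nat.pow_le_pow_right hp₀ ht)), Nat.zero_mod]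
  have hAn (t : ℕ) : min (A t) (n * (p - 1)) = A t := min_eq_left (columnSum_le_mul hp₀ n lam t)
  have hi'n : i' < n := by
    by_contra h
    simp [hlam.2.1 i' (not_lt.1 h)] at hi'
  have hjump : columnSum p (i + 1) lam j < min (A j) ((i + 1) * (p - 1)) :=
    lt_min (columnSum_lt_of_digit_ne_zero hii' hi'n hi') (columnSum_lt_mul_of_digit_ne hp₀ hi)
  have hj : j < d := by
    by_contra h
    simp [hAd j (not_lt.1 h)] at hjump
  refine ⟨greedyPartition p A d, ⟨greedyPartition_antitone,
    fun i => greedyPartition_eq_zero fun t => columnSum_le_mul hp₀ n lam t, ?_⟩,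
    carry_eq_of_columnSum_eq fun t => by rw [columnSum_greedyPartition hp₀ hAd, hAn], ?_⟩
  · simp only [sum_greedyPartition, hAn]
    exact (hexpand n).symm.trans hlam.2.2
  · intro hdom
    have hle := hdom (i + 1)
    rw [sum_greedyPartition, hexpand] at hle
    refine hle.not_gt (sum_lt_sum (fun t _ => Nat.mul_le_mul_left _ (le_min ?_ ?_))
      ⟨j, mem_range.2 hj, Nat.mul_lt_mul_of_pos_left hjump (pow_pos hp₀ j)⟩)
    · exact columnSum_mono (by omega) lam t
    · exact columnSum_le_mul hp₀ _ lam t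

theorem doty_condition_iff_max_for_carry_pattern
    (p n d : ℕ) (hp : p.Prime) (lam : ℕ → ℕ) (hlam : IsPartition n d lam) :
    DotyCondition p lam ↔
      ∀ mu : ℕ → ℕ, IsPartition n d mu →
        (∀ i, carry p n mu i = carry p n lam i) → Dominates lam mu := by
  constructor
  · intro hdoty mu hmu hcarry
    have hcol := columnSum_eq_of_carry_eq hp.pos (hmu.2.2.trans hlam.2.2.symm) hcarry
    exact dominates_of_columnSum_le hp.one_lt fun k t =>
      columnSum_le_of_dotyCondition hp.pos hdoty hlam.2.1 hmu.2.1 (hcol t) k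
  · intro hmax
    by_contra hnd
    obtain ⟨mu, hmu, hcarry, hndom⟩ := exists_not_dominates_of_not_dotyCondition hp.one_lt hlam hnd
    exact hndom (hmax mu hmu hcarry)
end

section
/- Let p be a prime, λ a partition of d with at most n parts, and pλ := (pλ_1, …, pλ_n), a partition of pd with at most n parts. Then every partition μ of d with at most n parts with c(μ) = c(λ) satisfies μ ⊴ λ if and only if every partition ν of pd with at most n parts with c(ν) = c(pλ) satisfies ν ⊴ pλ. (Combinatorial form of Lemma 4.4(b): the multiplicity of L(pλ) in H^0(pd) equals that of L(λ) in H^0(d).) -/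
open Finset

theorem carry_mul_zero (p n : ℕ) (β : ℕ → ℕ) : carry p n (fun j => p * β j) 0 = 0 := by
  simp [carry]

theorem carry_mul_succ {p : ℕ} (hp : 0 < p) (n : ℕ) (β : ℕ → ℕ) (i : ℕ) :
    carry p n (fun j => p * β j) (i + 1) = carry p n β i := by
  have hmod (j : ℕ) : p * β j % p ^ (i + 1 + 1) = p * (β j % p ^ (i + 1)) := by
    rw [pow_succ', Nat.mul_mod_mul_left]
  simp only [carry, hmod, ← mul_sum]
  rw [pow_succ' p (i + 1), Nat.mul_div_mul_left _ _ hp]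

theorem carry_mul_eq_carry_mul_iff {p : ℕ} (hp : 0 < p) (n : ℕ) (m l : ℕ → ℕ) :
    (∀ i, carry p n (fun j => p * m j) i = carry p n (fun j => p * l j) i) ↔
      ∀ i, carry p n m i = carry p n l i := by
  constructor
  · intro h i
    simpa only [carry_mul_succ hp] using h (i + 1)
  · rintro h (_ | i)
    · rw [carry_mul_zero, carry_mul_zero]
    · simpa only [carry_mul_succ hp] using h i

theorem dominates_mul_iff {p : ℕ} (hp : 0 < p) (l m : ℕ → ℕ) :
    Dominates (fun j => p * l j) (fun j => p * m j) ↔ Dominates l m := by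
  simp only [Dominates, ← mul_sum, Nat.mul_le_mul_left_iff hp]

theorem IsPartition.mul {n d : ℕ} {l : ℕ → ℕ} (h : IsPartition n d l) (p : ℕ) :
    IsPartition n (p * d) (fun j => p * l j) := by
  obtain ⟨hanti, hzero, hsum⟩ := h
  exact ⟨fun a b hab => Nat.mul_le_mul_left p (hanti hab),
    fun i hi => by simp [hzero i hi], by rw [← mul_sum, hsum]⟩

theorem dvd_of_carry_zero_eq_zero {p n : ℕ} (hp : 0 < p) {ν : ℕ → ℕ}
    (hcarry : carry p n ν 0 = 0) (hsum : p ∣ ∑ j ∈ range n, ν j) {j : ℕ} (hj : j < n) :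
    p ∣ ν j := by
  have hlt : ∑ j ∈ range n, ν j % p < p := by
    simpa [carry, Nat.div_eq_zero_iff, hp.ne'] using hcarry
  have hdvd : p ∣ ∑ j ∈ range n, ν j % p := by
    rwa [Nat.dvd_iff_mod_eq_zero, ← sum_nat_mod, ← Nat.dvd_iff_mod_eq_zero]
  have hres : ∑ j ∈ range n, ν j % p = 0 := Nat.eq_zero_of_dvd_of_lt hdvd hlt
  exact Nat.dvd_of_mod_eq_zero (sum_eq_zero_iff.mp hres j (mem_range.mpr hj))

theorem IsPartition.exists_eq_mul_of_carry_zero_eq_zero {p n d : ℕ} (hp : 0 < p)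
    {ν : ℕ → ℕ} (hν : IsPartition n (p * d) ν) (hcarry : carry p n ν 0 = 0) :
    ∃ μ, IsPartition n d μ ∧ ν = fun j => p * μ j := by
  obtain ⟨hanti, hzero, hsum⟩ := hν
  have hdvd (j : ℕ) : p ∣ ν j := by
    rcases lt_or_ge j n with hj | hj
    · exact dvd_of_carry_zero_eq_zero hp hcarry (hsum ▸ dvd_mul_right p d) hj
    · simp [hzero j hj]
  have hν_eq : ν = fun j => p * (ν j / p) := funext fun j => (Nat.mul_div_cancel' (hdvd j)).symm
  refine ⟨fun j => ν j / p, ⟨fun a b hab => Nat.div_le_div_right (hanti hab),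
    fun i hi => by simp [hzero i hi], ?_⟩, hν_eq⟩
  apply Nat.eq_of_mul_eq_mul_left hp
  rw [mul_sum, ← hsum]
  exact sum_congr rfl fun j _ => Nat.mul_div_cancel' (hdvd j)

theorem max_for_carry_pattern_iff_p_mul_general
    (p n d : ℕ) (hp : p.Prime) (lam : ℕ → ℕ) :
    (∀ mu : ℕ → ℕ, IsPartition n d mu →
        (∀ i, carry p n mu i = carry p n lam i) → Dominates lam mu) ↔
      (∀ nu : ℕ → ℕ, IsPartition n (p * d) nu →
        (∀ i, carry p n nu i = carry p n (fun j => p * lam j) i) →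
          Dominates (fun j => p * lam j) nu) := by
  constructor
  · intro H nu hnu hcarry
    obtain ⟨mu, hmu, rfl⟩ :=
      hnu.exists_eq_mul_of_carry_zero_eq_zero hp.pos (by rw [hcarry 0, carry_mul_zero])
    exact (dominates_mul_iff hp.pos lam mu).2
      (H mu hmu ((carry_mul_eq_carry_mul_iff hp.pos n mu lam).1 hcarry))
  · intro H mu hmu hcarry
    exact (dominates_mul_iff hp.pos lam mu).1
      (H _ (hmu.mul p) ((carry_mul_eq_carry_mul_iff hp.pos n mu lam).2 hcarry))

theorem max_for_carry_pattern_iff_p_mul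
    (p n d : ℕ) (hp : p.Prime) (lam : ℕ → ℕ) (hlam : IsPartition n d lam) :
    (∀ mu : ℕ → ℕ, IsPartition n d mu →
        (∀ i, carry p n mu i = carry p n lam i) → Dominates lam mu) ↔
      (∀ nu : ℕ → ℕ, IsPartition n (p * d) nu →
        (∀ i, carry p n nu i = carry p n (fun j => p * lam j) i) →
          Dominates (fun j => p * lam j) nu) :=
  max_for_carry_pattern_iff_p_mul_general p n d hp lam
end

section
/- Let p be a prime. If a partition λ of d with at most n parts satisfies James' condition, then λ satisfies the Doty digit condition. -/
/-- `lpexp p t` is the least nonnegative integer `l` with `t < p ^ l`. -/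
noncomputable def lpexp (p t : ℕ) : ℕ := sInf {l : ℕ | t < p ^ l}

/-- James' condition: consecutive parts satisfy `λ_i ≡ -1 (mod p ^ lpexp p (λ_{i+1}))`
(indices `0 ≤ i`, `i + 1 < n` in 0-based indexing). -/
def JamesCondition (p n : ℕ) (l : ℕ → ℕ) : Prop :=
  ∀ i, i + 1 < n → p ^ lpexp p (l (i + 1)) ∣ l i + 1

/-!
Let `L = l_p(λ_{i+1})`. Since `p ^ L ∣ λ_i + 1`, the lowest `L` base-`p` digits of `λ_i` all
equal `p - 1`, while `λ_{i+1} < p ^ L`, so every digit of `λ_{i+1}` from position `L` on is `0`.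
Hence a digit of `λ_i` other than `p - 1` forces the same digit of `λ_{i+1}` to vanish, and since
`0 ≠ p - 1` this propagates to all later parts.
-/

theorem Nat.mod_eq_sub_one_of_dvd_add_one {a m : ℕ} (h : m ∣ a + 1) : a % m = m - 1 := by
  obtain ⟨c, hc⟩ := h
  have hm : 0 < m := Nat.pos_of_ne_zero (by rintro rfl; simp at hc)
  have hc0 : c ≠ 0 := by rintro rfl; simp at hc
  have hmc : m * (c - 1) + m = m * c := by rw [← Nat.mul_add_one, Nat.sub_one_add_one hc0]
  rw [show a = m * (c - 1) + (m - 1) by omega, Nat.mul_add_mod, Nat.mod_eq_of_lt (by omega)]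

theorem Nat.mul_sub_one_div_left {x p : ℕ} (hx : 0 < x) : (x * p - 1) / x = p - 1 := by
  rcases Nat.eq_zero_or_pos p with rfl | hp
  · simp
  have hxp := Nat.mul_pos hx hp
  apply Nat.div_eq_of_lt_le
  · rw [Nat.sub_one_mul, Nat.mul_comm p]; omega
  · rw [Nat.sub_one_add_one hp.ne', Nat.mul_comm p]; omega

theorem digit_eq_sub_one_of_pow_dvd_add_one {p a j : ℕ} (hp : 0 < p) (h : p ^ (j + 1) ∣ a + 1) :
    a / p ^ j % p = p - 1 := by
  rw [← Nat.mod_mul_right_div_self, ← pow_succ, Nat.mod_eq_sub_one_of_dvd_add_one h, pow_succ,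
    Nat.mul_sub_one_div_left (pow_pos hp j)]

theorem lt_pow_lpexp {p : ℕ} (hp : 1 < p) (t : ℕ) : t < p ^ lpexp p t :=
  Nat.sInf_mem (s := {l | t < p ^ l}) ⟨t, Nat.lt_pow_self hp⟩

theorem digit_eq_zero_of_pow_lpexp_dvd_add_one {p a b j : ℕ} (hp : 1 < p)
    (hab : p ^ lpexp p b ∣ a + 1) (ha : a / p ^ j % p ≠ p - 1) : b / p ^ j % p = 0 := by
  rcases lt_or_ge j (lpexp p b) with hj | hj
  · exact absurd
      (digit_eq_sub_one_of_pow_dvd_add_one (by omega) ((pow_dvd_pow p hj).trans hab)) ha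
  · have hb : b < p ^ j := (lt_pow_lpexp hp b).trans_le (Nat.pow_le_pow_right (by omega) hj)
    rw [Nat.div_eq_of_lt hb, Nat.zero_mod]

theorem dotyCondition_of_forall_succ {p : ℕ} {l : ℕ → ℕ} (hp : 1 < p)
    (h : ∀ i j, l i / p ^ j % p ≠ p - 1 → l (i + 1) / p ^ j % p = 0) : DotyCondition p l := by
  intro i j i' hii' hi
  induction i', hii' using Nat.le_induction with
  | base => exact h i j hi
  | succ k _ ih => exact h k j (by omega)

theorem james_implies_doty (p n d : ℕ) (hp : p.Prime)
    (lam : ℕ → ℕ) (hlam : IsPartition n d lam) (hJ : JamesCondition p n lam) :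
    DotyCondition p lam := by
  obtain ⟨-, hzero, -⟩ := hlam
  refine dotyCondition_of_forall_succ hp.one_lt fun i j hi => ?_
  by_cases hin : i + 1 < n
  · exact digit_eq_zero_of_pow_lpexp_dvd_add_one hp.one_lt (hJ i hin) hi
  · rw [hzero (i + 1) (by omega), Nat.zero_div, Nat.zero_mod]
end

section
/- Let p be a prime and let λ be a partition of d with at most n parts satisfying the Doty digit condition. Then λ satisfies James' condition if and only if there is no partition μ of d with at most n parts such that μ ⊳ λ (μ strictly dominates λ), μ satisfies the Doty digit condition, and c(μ) > c(λ). (This is the equivalence asserted in Remark 5.2, rederiving James' Theorem 5.1 from Doty's description of H^0(d).) -/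
open Finset

namespace JamesDoty

theorem sum_range_min_sub (m S k : ℕ) :
    ∑ t ∈ range k, min m (S - m * t) = min S (m * k) := by
  induction k with
  | zero => simp
  | succ k ih =>
    rw [sum_range_succ, ih, Nat.mul_succ]
    omega

theorem eq_min_sub_of_staircase {m n : ℕ} {a : ℕ → ℕ} (hle : ∀ t, a t ≤ m)
    (hstair : ∀ t t', t < t' → a t ≠ m → a t' = 0) (hzero : ∀ t, n ≤ t → a t = 0) (t : ℕ) :
    a t = min m ((∑ s ∈ range n, a s) - m * t) := by
  induction n generalizing a t with
  | zero => simp [hzero t (Nat.zero_le t)]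
  | succ n ih =>
    have ih' := ih (a := fun s => a (s + 1)) (fun s => hle _)
      (fun s s' h => hstair _ _ (by omega)) (fun s hs => hzero _ (by omega))
    rw [sum_range_succ']
    by_cases ha : a 0 = m
    · obtain _ | t := t
      · have := hle 0
        omega
      · rw [ih' t, Nat.mul_succ]
        omega
    · have hrest : ∀ s, a (s + 1) = 0 := fun s => hstair 0 _ (Nat.succ_pos s) ha
      have := hle 0
      obtain _ | t := t
      · simp only [hrest, sum_const_zero, zero_add, mul_zero, Nat.sub_zero]
        omega
      · simp only [hrest, sum_const_zero, zero_add, Nat.mul_succ]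
        omega

theorem exists_crossing_with_flat_middle {f : ℕ → ℕ} {K a b : ℕ} (hab : a < b)
    (ha : f a < K) (hb : K < f b) :
    ∃ a' b', a' < b' ∧ f a' < K ∧ K < f b' ∧ ∀ v, a' < v → v < b' → f v = K := by
  induction h : b - a using Nat.strong_induction_on generalizing a b with
  | _ g ih =>
    by_cases hflat : ∀ v, a < v → v < b → f v = K
    · exact ⟨a, b, hab, ha, hb, hflat⟩
    push Not at hflat
    obtain ⟨v, hav, hvb, hv⟩ := hflat
    rcases lt_or_gt_of_ne hv with hlt | hgt
    · exact ih (b - v) (by omega) hvb hlt hb rfl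
    · exact ih (v - a) (by omega) hav ha hgt rfl

section Digits

variable {p : ℕ}

theorem mod_pow_eq_sum_digits (x m : ℕ) :
    x % p ^ m = ∑ v ∈ range m, x / p ^ v % p * p ^ v := by
  induction m with
  | zero => simp [Nat.mod_one]
  | succ m ih => rw [Nat.mod_pow_succ, ih, sum_range_succ, mul_comm (p ^ m)]

theorem digit_sum_mul_pow {c : ℕ → ℕ} (hc : ∀ v, c v < p) (L m : ℕ) :
    (∑ v ∈ range L, c v * p ^ v) / p ^ m % p = if m < L then c m else 0 := by
  have hp : 0 < p := (Nat.zero_le _).trans_lt (hc 0)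
  induction L generalizing c m with
  | zero => simp
  | succ L ih =>
    have hsplit : ∑ v ∈ range (L + 1), c v * p ^ v
        = c 0 + p * ∑ v ∈ range L, c (v + 1) * p ^ v := by
      rw [sum_range_succ', mul_sum, add_comm, pow_zero, mul_one]
      exact congrArg _ (sum_congr rfl fun v _ => by ring)
    rw [hsplit]
    obtain _ | m := m
    · simp [Nat.add_mul_mod_self_left, Nat.mod_eq_of_lt (hc 0)]
    · rw [pow_succ', ← Nat.div_div_eq_div_mul, Nat.add_mul_div_left _ _ hp,
        Nat.div_eq_of_lt (hc 0), zero_add, ih (fun v => hc (v + 1))]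
      simp

theorem div_pow_mod_ne_zero (hp : 0 < p) {x u : ℕ} (h₁ : p ^ u ≤ x) (h₂ : x < p ^ (u + 1)) :
    x / p ^ u % p ≠ 0 := by
  have hpos : 0 < x / p ^ u := Nat.div_pos h₁ (pow_pos hp u)
  have hlt : x / p ^ u < p := Nat.div_lt_of_lt_mul (by rwa [← pow_succ])
  rw [Nat.mod_eq_of_lt hlt]
  omega

theorem pow_dvd_succ_of_digits_eq (hp : 0 < p) {l x : ℕ}
    (h : ∀ j < l, x / p ^ j % p = p - 1) : p ^ l ∣ x + 1 := by
  induction l generalizing x with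
  | zero => simp
  | succ l ih =>
    have hlow : x % p = p - 1 := by simpa using h 0 (Nat.succ_pos l)
    obtain ⟨c, hc⟩ := ih (x := x / p) fun j hj => by
      rw [Nat.div_div_eq_div_mul, ← pow_succ']
      exact h (j + 1) (by omega)
    refine ⟨c, ?_⟩
    have := Nat.div_add_mod x p
    rw [pow_succ', mul_assoc, ← hc, mul_add]
    omega

end Digits

theorem sum_eq_mul_sum_div_add_sum_mod {ι : Type*} (s : Finset ι) (x : ι → ℕ) (q : ℕ) :
    ∑ t ∈ s, x t = q * ∑ t ∈ s, x t / q + ∑ t ∈ s, x t % q := by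
  rw [mul_sum, ← sum_add_distrib]
  exact sum_congr rfl fun t _ => (Nat.div_add_mod _ _).symm

theorem sum_div_le_sum_div_of_dominates {q n : ℕ} (hq : 0 < q) {lam mu : ℕ → ℕ}
    (hanti : Antitone lam) (hn : lam n = 0)
    (hdvd : ∀ t, t + 1 < n → q ≤ lam (t + 1) → q ∣ lam t + 1) (hdom : Dominates mu lam) :
    ∑ t ∈ range n, lam t / q ≤ ∑ t ∈ range n, mu t / q := by
  classical
  have hex : ∃ k, lam k < q := ⟨n, by omega⟩
  obtain ⟨k, hkq, hbig, hkn⟩ : ∃ k, lam k < q ∧ (∀ t < k, q ≤ lam t) ∧ k ≤ n :=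
    ⟨Nat.find hex, Nat.find_spec hex, fun t ht => not_lt.1 (Nat.find_min hex ht),
      Nat.find_min' hex (by omega)⟩
  have htail : ∑ t ∈ range n, lam t / q = ∑ t ∈ range k, lam t / q := by
    rw [← sum_range_add_sum_Ico _ hkn, sum_eq_zero fun t ht =>
      Nat.div_eq_of_lt ((hanti (mem_Ico.1 ht).1).trans_lt hkq), add_zero]
  rw [htail]
  obtain _ | k := k
  · simp
  have hmod : ∀ t < k, lam t % q = q - 1 := fun t ht => by
    obtain ⟨c, hc⟩ := hdvd t (by omega) (hbig (t + 1) (by omega))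
    obtain _ | c := c
    · omega
    · rw [show lam t = (q - 1) + q * c by rw [Nat.mul_succ] at hc; omega,
        Nat.add_mul_mod_self_left, Nat.mod_eq_of_lt (by omega)]
  have hlam : k * (q - 1) ≤ ∑ t ∈ range (k + 1), lam t % q := by
    calc k * (q - 1) = ∑ t ∈ range k, lam t % q := by
          rw [sum_congr rfl fun t ht => hmod t (mem_range.1 ht)]; simp
      _ ≤ _ := sum_le_sum_of_subset (range_subset_range.2 k.le_succ)
  have hmu₁ : ∑ t ∈ range (k + 1), mu t % q ≤ (k + 1) * (q - 1) := by
    calc _ ≤ ∑ _t ∈ range (k + 1), (q - 1) :=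
          sum_le_sum fun t _ => Nat.le_sub_one_of_lt (Nat.mod_lt _ hq)
      _ = _ := by simp
  have hmu₂ : ∑ t ∈ range (k + 1), mu t / q ≤ ∑ t ∈ range n, mu t / q :=
    sum_le_sum_of_subset (range_subset_range.2 hkn)
  have hd := hdom (k + 1)
  rw [sum_eq_mul_sum_div_add_sum_mod _ lam q, sum_eq_mul_sum_div_add_sum_mod _ mu q] at hd
  have hlt : q * ∑ t ∈ range (k + 1), lam t / q < q * (∑ t ∈ range (k + 1), mu t / q + 1) := by
    rw [Nat.succ_mul] at hmu₁
    rw [Nat.mul_succ]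
    omega
  exact Nat.lt_succ_iff.1 (Nat.lt_of_mul_lt_mul_left hlt) |>.trans hmu₂

theorem lpexp_le_iff {p : ℕ} (hp : 1 < p) {x l : ℕ} : lpexp p x ≤ l ↔ x < p ^ l :=
  ⟨fun h => (Nat.sInf_mem (s := {l | x < p ^ l}) ⟨x, Nat.lt_pow_self hp⟩).trans_le
    (Nat.pow_le_pow_right hp.le h), fun h => Nat.sInf_le h⟩

theorem carry_eq_sub_sum_div (p n : ℕ) (β : ℕ → ℕ) (i : ℕ) :
    carry p n β i = (∑ t ∈ range n, β t) / p ^ (i + 1) - ∑ t ∈ range n, β t / p ^ (i + 1) := by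
  rcases Nat.eq_zero_or_pos (p ^ (i + 1)) with hq | hq
  · simp [carry, hq]
  rw [carry, sum_eq_mul_sum_div_add_sum_mod (range n) β (p ^ (i + 1)),
    add_comm (p ^ (i + 1) * _), Nat.add_mul_div_left _ _ hq, Nat.add_sub_cancel]

theorem carry_le_of_jamesCondition {p n d : ℕ} (hp : 1 < p) {lam mu : ℕ → ℕ}
    (hlam : IsPartition n d lam) (hJ : JamesCondition p n lam)
    (hmu : IsPartition n d mu) (hdom : Dominates mu lam) (i : ℕ) :
    carry p n mu i ≤ carry p n lam i := by
  rw [carry_eq_sub_sum_div, carry_eq_sub_sum_div, hlam.2.2, hmu.2.2]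
  refine Nat.sub_le_sub_left (sum_div_le_sum_div_of_dominates (by positivity) hlam.1
    (hlam.2.1 n le_rfl) (fun t ht hq => ?_) hdom) _
  have hi : i + 1 < lpexp p (lam (t + 1)) := by
    rwa [← not_le, lpexp_le_iff hp, not_lt]
  exact (pow_dvd_pow p hi.le).trans (hJ t ht)

def colSum (p k : ℕ) (β : ℕ → ℕ) (v : ℕ) : ℕ := ∑ t ∈ range k, β t / p ^ v % p

section ColSum

variable {p : ℕ}

theorem sum_mod_pow_eq_sum_colSum (k m : ℕ) (β : ℕ → ℕ) :
    ∑ t ∈ range k, β t % p ^ m = ∑ v ∈ range m, colSum p k β v * p ^ v := by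
  simp only [mod_pow_eq_sum_digits (p := p), colSum, sum_mul]
  exact sum_comm

theorem carry_eq_sum_colSum (n : ℕ) (β : ℕ → ℕ) (i : ℕ) :
    carry p n β i = (∑ v ∈ range (i + 1), colSum p n β v * p ^ v) / p ^ (i + 1) := by
  rw [carry, sum_mod_pow_eq_sum_colSum]

theorem sum_range_eq_sum_colSum {k L : ℕ} {β : ℕ → ℕ} (hβ : ∀ t, β t < p ^ L) :
    ∑ t ∈ range k, β t = ∑ v ∈ range L, colSum p k β v * p ^ v := by
  rw [← sum_mod_pow_eq_sum_colSum]
  exact sum_congr rfl fun t _ => (Nat.mod_eq_of_lt (hβ t)).symm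

theorem colSum_eq_min {β σ : ℕ → ℕ}
    (hβ : ∀ t v, β t / p ^ v % p = min (p - 1) (σ v - (p - 1) * t)) (k v : ℕ) :
    colSum p k β v = min (σ v) ((p - 1) * k) := by
  simp only [colSum, hβ, sum_range_min_sub]

theorem colSum_le (hp : 0 < p) (k : ℕ) (β : ℕ → ℕ) (v : ℕ) : colSum p k β v ≤ (p - 1) * k := by
  calc colSum p k β v ≤ ∑ _t ∈ range k, (p - 1) :=
        sum_le_sum fun t _ => Nat.le_sub_one_of_lt (Nat.mod_lt _ hp)
    _ = (p - 1) * k := by simp [mul_comm]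

theorem colSum_eq_zero (hp : 0 < p) {k L : ℕ} {β : ℕ → ℕ} (hβ : ∀ t, β t < p ^ L) {v : ℕ}
    (hv : L ≤ v) : colSum p k β v = 0 :=
  sum_eq_zero fun t _ => by
    rw [Nat.div_eq_of_lt ((hβ t).trans_le (Nat.pow_le_pow_right hp hv)), Nat.zero_mod]

end ColSum

/-- Down each column the digits of a Doty partition read `p - 1, …, p - 1, r, 0, …, 0`, so they
are determined by the column sum. -/
theorem digit_eq_min_of_dotyCondition {p n : ℕ} (hp : 0 < p) {lam : ℕ → ℕ}
    (hD : DotyCondition p lam) (hzero : ∀ t, n ≤ t → lam t = 0) (t v : ℕ) :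
    lam t / p ^ v % p = min (p - 1) (colSum p n lam v - (p - 1) * t) :=
  eq_min_sub_of_staircase (fun t => Nat.le_sub_one_of_lt (Nat.mod_lt _ hp))
    (fun t t' h => hD t v t' h) (fun t ht => by simp [hzero t ht]) t

def ofColSums (p L : ℕ) (σ : ℕ → ℕ) (t : ℕ) : ℕ :=
  ∑ v ∈ range L, min (p - 1) (σ v - (p - 1) * t) * p ^ v

section OfColSums

variable {p L : ℕ} {σ : ℕ → ℕ}

theorem ofColSums_digit (hp : 0 < p) (hσ : ∀ v, L ≤ v → σ v = 0) (t v : ℕ) :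
    ofColSums p L σ t / p ^ v % p = min (p - 1) (σ v - (p - 1) * t) := by
  rw [ofColSums, digit_sum_mul_pow (fun w => by omega)]
  split_ifs with hv
  · rfl
  · simp [hσ v (not_lt.1 hv)]

theorem dotyCondition_ofColSums (hp : 0 < p) (hσ : ∀ v, L ≤ v → σ v = 0) :
    DotyCondition p (ofColSums p L σ) := by
  intro t v t' htt' hne
  rw [ofColSums_digit hp hσ] at hne ⊢
  have : (p - 1) * (t + 1) ≤ (p - 1) * t' := Nat.mul_le_mul_left _ htt'
  rw [Nat.mul_succ] at this
  omega

theorem sum_range_ofColSums (k : ℕ) :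
    ∑ t ∈ range k, ofColSums p L σ t = ∑ v ∈ range L, min (σ v) ((p - 1) * k) * p ^ v := by
  simp only [ofColSums]
  rw [sum_comm]
  simp only [← sum_mul, sum_range_min_sub]

theorem isPartition_ofColSums {n : ℕ} (hσ : ∀ v, σ v ≤ (p - 1) * n) :
    IsPartition n (∑ v ∈ range L, σ v * p ^ v) (ofColSums p L σ) := by
  refine ⟨fun t t' h => sum_le_sum fun v _ => Nat.mul_le_mul_right _ ?_,
    fun t ht => sum_eq_zero fun v _ => ?_, ?_⟩
  · have := Nat.mul_le_mul_left (p - 1) h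
    omega
  · have := Nat.mul_le_mul_left (p - 1) ht
    have := hσ v
    simp only [mul_eq_zero]
    omega
  · rw [sum_range_ofColSums]
    exact sum_congr rfl fun v _ => by rw [min_eq_left (hσ v)]

theorem dominates_ofColSums (hp : 0 < p) {n : ℕ} {lam : ℕ → ℕ} (hzero : ∀ t, n ≤ t → lam t = 0)
    (hD : DotyCondition p lam) (hL : ∀ t, lam t < p ^ L)
    (h : ∀ k, ∑ v ∈ range L, min (colSum p n lam v) ((p - 1) * k) * p ^ v
      ≤ ∑ v ∈ range L, min (σ v) ((p - 1) * k) * p ^ v) :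
    Dominates (ofColSums p L σ) lam := fun k => by
  rw [sum_range_eq_sum_colSum hL, sum_range_ofColSums]
  simp only [colSum_eq_min (digit_eq_min_of_dotyCondition hp hD hzero) k]
  exact h k

end OfColSums

/-- Borrowing `1` from column `b` down to column `a`, one column at a time. -/
def borrowChain (p a b : ℕ) (σ : ℕ → ℕ) (v : ℕ) : ℕ :=
  if v = a then σ v + p
  else if a < v ∧ v < b then σ v + (p - 1)
  else if v = b then σ v - 1
  else σ v

section BorrowChain

variable {p a b : ℕ} {σ : ℕ → ℕ}

theorem borrowChain_le {N K : ℕ} (hσ : ∀ v, σ v ≤ N) (ha : σ a < K)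
    (hmid : ∀ v, a < v → v < b → σ v = K) (hK : K + (p - 1) ≤ N) (v : ℕ) :
    borrowChain p a b σ v ≤ N := by
  unfold borrowChain
  split_ifs with h₁ h₂
  · subst h₁
    omega
  · have := hmid v h₂.1 h₂.2
    omega
  · exact (Nat.sub_le _ 1).trans (hσ v)
  · exact hσ v

theorem borrowChain_eq_zero (hab : a < b) {v : ℕ} (hbv : b < v) (hσ : σ v = 0) :
    borrowChain p a b σ v = 0 := by
  rw [borrowChain, if_neg (by omega), if_neg (by omega), if_neg (by omega), hσ]

theorem sum_borrowChain (hp : 0 < p) (hab : a < b) (hb : 0 < σ b) (m : ℕ) :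
    ∑ v ∈ range m, borrowChain p a b σ v * p ^ v
      = ∑ v ∈ range m, σ v * p ^ v + if a < m ∧ m ≤ b then p ^ m else 0 := by
  induction m with
  | zero => simp
  | succ m ih =>
    rw [sum_range_succ, sum_range_succ, ih, pow_succ]
    obtain ⟨s, hs⟩ : ∃ s, σ b = s + 1 := ⟨σ b - 1, by omega⟩
    obtain ⟨q, rfl⟩ : ∃ q, p = q + 1 := ⟨p - 1, by omega⟩
    unfold borrowChain
    split_ifs <;> subst_vars <;> simp only [hs, Nat.add_sub_cancel] at * <;> first | omega | ring_nf

theorem sum_min_le_sum_min_borrowChain (hp : 1 < p) {K L c : ℕ} (hab : a < b) (hbL : b < L)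
    (ha : σ a < K) (hb : K < σ b) (hmid : ∀ v, a < v → v < b → σ v = K)
    (hc : c ≤ K ∨ K + (p - 1) ≤ c) :
    ∑ v ∈ range L, min (σ v) c * p ^ v ≤ ∑ v ∈ range L, min (borrowChain p a b σ v) c * p ^ v := by
  rcases hc with hc | hc
  · refine sum_le_sum fun v _ => Nat.mul_le_mul_right _ ?_
    unfold borrowChain
    split_ifs <;> subst_vars <;> omega
  · -- below the threshold `c` the truncated columns undergo the same borrow chain
    calc ∑ v ∈ range L, min (σ v) c * p ^ v
        = ∑ v ∈ range L, borrowChain p a b (fun v => min (σ v) c) v * p ^ v := by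
          rw [sum_borrowChain (by omega) hab (by omega)]
          simp [hbL.not_ge]
      _ ≤ _ := sum_le_sum fun v _ => Nat.mul_le_mul_right _ (by
          unfold borrowChain
          dsimp only
          split_ifs with h₁ h₂
          · subst h₁
            omega
          · have := hmid v h₂.1 h₂.2
            omega
          all_goals omega)

end BorrowChain

theorem exists_crossing_of_not_jamesCondition {p n : ℕ} (hp : 1 < p) {lam : ℕ → ℕ}
    (hzero : ∀ t, n ≤ t → lam t = 0) (hD : DotyCondition p lam)
    (hJ : ¬ JamesCondition p n lam) :
    ∃ j u k, j < u ∧ k < n ∧ colSum p n lam j < (p - 1) * k ∧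
      (p - 1) * k < colSum p n lam u := by
  simp only [JamesCondition, not_forall] at hJ
  obtain ⟨i, hi, hndvd⟩ := hJ
  set l := lpexp p (lam (i + 1))
  obtain ⟨j, hjl, hj⟩ : ∃ j < l, lam i / p ^ j % p ≠ p - 1 := by
    by_contra! h
    exact hndvd (pow_dvd_succ_of_digits_eq (by omega) h)
  have htop : lam (i + 1) / p ^ (l - 1) % p ≠ 0 := by
    refine div_pow_mod_ne_zero (by omega) ?_ ?_
    · rw [← not_lt, ← lpexp_le_iff hp]
      omega
    · rw [← lpexp_le_iff hp]
      omega
  rw [digit_eq_min_of_dotyCondition (by omega) hD hzero] at hj htop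
  have hσj : colSum p n lam j < (p - 1) * (i + 1) := by rw [Nat.mul_succ]; omega
  have hσu : (p - 1) * (i + 1) < colSum p n lam (l - 1) := by rw [Nat.mul_succ] at htop ⊢; omega
  refine ⟨j, l - 1, i + 1, lt_of_le_of_ne (by omega) fun h => ?_, hi, hσj, hσu⟩
  rw [h] at hσj
  omega

theorem exists_dominating_doty_of_flat_crossing {p n d : ℕ} (hp : 1 < p) {lam : ℕ → ℕ}
    (hlam : IsPartition n d lam) (hD : DotyCondition p lam) {a b k : ℕ} (hab : a < b)
    (hk : k < n) (ha : colSum p n lam a < (p - 1) * k) (hb : (p - 1) * k < colSum p n lam b)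
    (hmid : ∀ v, a < v → v < b → colSum p n lam v = (p - 1) * k) :
    ∃ mu, IsPartition n d mu ∧ Dominates mu lam ∧ DotyCondition p mu ∧
      ∀ i, carry p n mu i = carry p n lam i + if a < i + 1 ∧ i + 1 ≤ b then 1 else 0 := by
  set σ := colSum p n lam
  set L := b + 1 + lam 0
  set σ' := borrowChain p a b σ
  have hlamL : ∀ t, lam t < p ^ L := fun t => (hlam.1 (Nat.zero_le t)).trans_lt
    ((Nat.lt_pow_self hp).trans_le (Nat.pow_le_pow_right (by omega) (by omega)))
  have hσL : ∀ v, L ≤ v → σ v = 0 := fun v hv => colSum_eq_zero (by omega) hlamL hv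
  have hσ'L : ∀ v, L ≤ v → σ' v = 0 := fun v hv => borrowChain_eq_zero hab (by omega) (hσL v hv)
  have hσ'n : ∀ v, σ' v ≤ (p - 1) * n := by
    have hkn : (p - 1) * (k + 1) ≤ (p - 1) * n := Nat.mul_le_mul_left _ hk
    rw [Nat.mul_succ] at hkn
    exact borrowChain_le (colSum_le (by omega) n lam) ha hmid hkn
  have hweight : ∀ m, ∑ v ∈ range m, σ' v * p ^ v
      = ∑ v ∈ range m, σ v * p ^ v + if a < m ∧ m ≤ b then p ^ m else 0 :=
    sum_borrowChain (by omega) hab (by omega)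
  refine ⟨ofColSums p L σ', ?_, ?_, dotyCondition_ofColSums (by omega) hσ'L, fun i => ?_⟩
  · have := isPartition_ofColSums (L := L) hσ'n
    rwa [hweight, if_neg (by omega), add_zero, ← sum_range_eq_sum_colSum hlamL, hlam.2.2] at this
  · refine dominates_ofColSums (by omega) hlam.2.1 hD hlamL fun k' =>
      sum_min_le_sum_min_borrowChain hp hab (by omega) ha hb hmid ?_
    rcases le_or_gt k' k with h | h
    · exact Or.inl (Nat.mul_le_mul_left _ h)
    · have := Nat.mul_le_mul_left (p - 1) h
      rw [Nat.mul_succ] at this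
      exact Or.inr this
  · have hcol : colSum p n (ofColSums p L σ') = σ' := funext fun v => by
      rw [colSum_eq_min (ofColSums_digit (by omega) hσ'L), min_eq_left (hσ'n v)]
    rw [carry_eq_sum_colSum, carry_eq_sum_colSum, hcol, hweight]
    split_ifs
    · exact Nat.add_div_right _ (by positivity)
    · rfl

end JamesDoty

open JamesDoty in
theorem james_iff_no_strictly_dominating_doty_with_bigger_carry
    (p n d : ℕ) (hp : p.Prime) (lam : ℕ → ℕ)
    (hlam : IsPartition n d lam) (hD : DotyCondition p lam) :
    JamesCondition p n lam ↔
      ¬ ∃ mu : ℕ → ℕ, IsPartition n d mu ∧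
        Dominates mu lam ∧ mu ≠ lam ∧
        DotyCondition p mu ∧
        ((∀ i, carry p n lam i ≤ carry p n mu i) ∧ carry p n mu ≠ carry p n lam) := by
  constructor
  · rintro hJ ⟨mu, hmu, hdom, -, -, hle, hne⟩
    exact hne (funext fun i =>
      (carry_le_of_jamesCondition hp.one_lt hlam hJ hmu hdom i).antisymm (hle i))
  · intro hno
    by_contra hJ
    obtain ⟨j, u, k, hju, hk, hj, hu⟩ :=
      exists_crossing_of_not_jamesCondition hp.one_lt hlam.2.1 hD hJ
    obtain ⟨a, b, hab, ha, hb, hmid⟩ := exists_crossing_with_flat_middle hju hj hu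
    obtain ⟨mu, hmu, hdom, hmuD, hcarry⟩ :=
      exists_dominating_doty_of_flat_crossing hp.one_lt hlam hD hab hk ha hb hmid
    have hlt : carry p n lam (b - 1) < carry p n mu (b - 1) := by
      rw [hcarry, if_pos (by omega)]
      exact Nat.lt_succ_self _
    refine hno ⟨mu, hmu, hdom, fun h => ?_, hmuD, fun i => by rw [hcarry]; omega,
      fun h => ?_⟩ <;> rw [h] at hlt <;> exact lt_irrefl _ hlt
end

section
/- Let p be a prime and let λ_1 > λ_2 ≥ 1 be integers; write r := λ_1 − λ_2 with base-p digits r_i. Then λ_2 = Σ_{i=0}^{u} r̅_i p^i for some u ≥ 0 with r_u ≠ p − 1 if and only if λ_1 ≡ −1 (mod p^{l_p(λ_2)}). (This is the equivalence established in equations (5.2)–(5.3): membership of λ_2 in the second subset of Ψ_p(λ_1 − λ_2) is exactly James' criterion for the two-part partition (λ_1, λ_2).) -/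
/-- The `i`-th base-`p` digit of `r`. -/
def pdigit (p r i : ℕ) : ℕ := (r / p ^ i) % p

/-- For a base-`p` digit `a`, `pbar p a = p - 1 - a` is the unique `a̅` with
`0 ≤ a̅ ≤ p - 1` and `a + a̅ ≡ p - 1 (mod p)`. -/
def pbar (p a : ℕ) : ℕ := p - 1 - a

/-!
The digitwise complement `∑_{i<n} r̅_i p^i` equals `p^n - 1 - (r mod p^n)`. Put `l := l_p(λ₂)`, so
`p^(l-1) ≤ λ₂ < p^l`. Since `λ₁ + 1 = λ₂ + r + 1` and `0 < λ₂ + (r mod p^l) + 1 < 2 p^l`,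
divisibility by `p^l` means `λ₂ + (r mod p^l) + 1 = p^l`, i.e. `λ₂` is the complement for `n = l`.
Conversely, a representation with `u` works only for `u + 1 = l`: the complement for `n = u + 1`
is below `p^(u+1)`, and it is at least `p^u` exactly when `r_u ≠ p - 1`.
-/

lemma pbar_add_pdigit_add_one {p : ℕ} (hp : 0 < p) (r i : ℕ) :
    pbar p (pdigit p r i) + pdigit p r i + 1 = p := by
  have := Nat.mod_lt (r / p ^ i) hp
  unfold pbar pdigit
  lia

lemma sum_pbar_pdigit_add_mod_add_one {p : ℕ} (hp : 0 < p) (r n : ℕ) :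
    ∑ i ∈ Finset.range n, pbar p (pdigit p r i) * p ^ i + r % p ^ n + 1 = p ^ n := by
  induction n with
  | zero => simp [Nat.mod_one]
  | succ n ih =>
    calc _ = (∑ i ∈ Finset.range n, pbar p (pdigit p r i) * p ^ i + r % p ^ n + 1)
          + (pbar p (pdigit p r n) + pdigit p r n) * p ^ n := by
          rw [Finset.sum_range_succ, Nat.mod_pow_succ, pdigit]; ring
      _ = p ^ n * (pbar p (pdigit p r n) + pdigit p r n + 1) := by rw [ih]; ring
      _ = p ^ (n + 1) := by rw [pbar_add_pdigit_add_one hp, pow_succ]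

lemma pow_le_sum_pbar_pdigit_iff {p : ℕ} (hp : 0 < p) (r u : ℕ) :
    p ^ u ≤ ∑ i ∈ Finset.range (u + 1), pbar p (pdigit p r i) * p ^ i ↔
      pdigit p r u ≠ p - 1 := by
  have hlt := sum_pbar_pdigit_add_mod_add_one hp r u
  have hdigit := pbar_add_pdigit_add_one hp r u
  rw [Finset.sum_range_succ]
  constructor
  · intro h hu
    have hbar : pbar p (pdigit p r u) = 0 := by lia
    rw [hbar, zero_mul] at h
    lia
  · intro hu
    have hbar : 0 < pbar p (pdigit p r u) := by lia
    exact le_add_left (Nat.le_mul_of_pos_left _ hbar)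

lemma dvd_add_add_one_iff_of_lt {q a r : ℕ} (ha : a < q) :
    q ∣ a + r + 1 ↔ a + r % q + 1 = q := by
  have hr : r % q < q := Nat.mod_lt r (by lia)
  have hsplit : a + r + 1 = q * (r / q) + (a + r % q + 1) := by
    have := Nat.div_add_mod r q
    lia
  rw [hsplit, Nat.dvd_add_right (dvd_mul_right q _)]
  exact ⟨fun h => Nat.eq_of_dvd_of_lt_two_mul (by lia) h (by lia), fun h => ⟨1, by lia⟩⟩

lemma lpexp_eq_log_add_one {p t : ℕ} (hp : 1 < p) (ht : t ≠ 0) :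
    lpexp p t = Nat.log p t + 1 :=
  le_antisymm (Nat.sInf_le (Nat.lt_pow_succ_log_self hp t))
    (le_csInf ⟨_, Nat.lt_pow_succ_log_self hp t⟩ fun _ h => Nat.log_lt_of_lt_pow ht h)

theorem second_subset_iff_james_criterion (p l1 l2 : ℕ) (hp : p.Prime)
    (h12 : l2 < l1) (h2 : 1 ≤ l2) :
    (∃ u : ℕ, pdigit p (l1 - l2) u ≠ p - 1 ∧
        l2 = ∑ i ∈ Finset.range (u + 1), pbar p (pdigit p (l1 - l2) i) * p ^ i) ↔
      p ^ lpexp p l2 ∣ l1 + 1 := by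
  have hcompl := sum_pbar_pdigit_add_mod_add_one hp.pos (l1 - l2)
  have hl1 : l1 + 1 = l2 + (l1 - l2) + 1 := by lia
  rw [lpexp_eq_log_add_one hp.one_lt (by lia), hl1]
  constructor
  · rintro ⟨u, hu, hl2⟩
    have hlt : l2 < p ^ (u + 1) := by
      have := hcompl (u + 1)
      lia
    have hlog : Nat.log p l2 = u := (Nat.log_eq_iff (.inr ⟨hp.one_lt, by lia⟩)).2
      ⟨hl2 ▸ (pow_le_sum_pbar_pdigit_iff hp.pos _ u).2 hu, hlt⟩
    rw [hlog, dvd_add_add_one_iff_of_lt hlt]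
    have := hcompl (u + 1)
    lia
  · intro hdvd
    set u := Nat.log p l2
    have hl2 : l2 = ∑ i ∈ Finset.range (u + 1), pbar p (pdigit p (l1 - l2) i) * p ^ i := by
      have hlt : l2 < p ^ (u + 1) := Nat.lt_pow_succ_log_self hp.one_lt l2
      have := (dvd_add_add_one_iff_of_lt hlt).1 hdvd
      have := hcompl (u + 1)
      lia
    exact ⟨u, (pow_le_sum_pbar_pdigit_iff hp.pos _ u).1 (hl2 ▸ Nat.pow_log_le_self p (by lia)), hl2⟩
end

section
/- Let p be a prime and let λ_1 > λ_2 ≥ 1 be integers; write r := λ_1 − λ_2 with base-p digits r_i. Then λ_2 = Σ_{i=0}^{u−1} r̅_i p^i + p^{u+a} for some u ≥ 0 and a ≥ 1 with r_u ≠ p − 1 if and only if (λ_1, λ_2) satisfies condition (ii). (This is the equivalence established in equation (5.4): membership of λ_2 in the first subset of Ψ_p(λ_1 − λ_2).) -/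
/-- Condition (ii) of Proposition 5.4: there is `u ≥ 0` with `λ₁ ≡ -1 (mod p^u)`,
`λ₁ ≢ -1 (mod p^(u+1))`, and `λ₂ = c + p^b` with `0 ≤ c < p^u` and `b > u`. -/
def CondII (p l1 l2 : ℕ) : Prop :=
  ∃ u : ℕ, p ^ u ∣ l1 + 1 ∧ ¬ p ^ (u + 1) ∣ l1 + 1 ∧
    ∃ c b : ℕ, c < p ^ u ∧ u < b ∧ l2 = c + p ^ b

/-!
Write `r̅⁽ᵘ⁾ := Σ_{i<u} r̅ᵢ pⁱ` (`digitComplement p r u`). Complementing the digits gives `r̅⁽ᵘ⁾ + (r mod pᵘ) + 1 = pᵘ`,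
so `r̅⁽ᵘ⁾` is the unique `c < pᵘ` with `pᵘ ∣ r + c + 1`, and
`r + r̅⁽ᵘ⁾ + pᵘ⁺ᵃ + 1 = pᵘ (⌊r / pᵘ⌋ + 1 + pᵃ)`.
With `λ₁ = r + λ₂` the two descriptions of `λ₂` therefore match, and for `a ≥ 1` the exact power
of `p` dividing `λ₁ + 1` exceeds `pᵘ` iff `p ∣ ⌊r / pᵘ⌋ + 1`, i.e. iff `rᵤ = p - 1`.
-/

def digitComplement (p r u : ℕ) : ℕ :=
  ∑ i ∈ Finset.range u, pbar p (pdigit p r i) * p ^ i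

section

variable {p : ℕ}

theorem digitComplement_add_mod_add_one (hp : 0 < p) (r u : ℕ) :
    digitComplement p r u + r % p ^ u + 1 = p ^ u := by
  induction u with
  | zero => simp [digitComplement, Nat.mod_one]
  | succ u ih =>
    have hdigit : pbar p (pdigit p r u) + pdigit p r u + 1 = p := by
      have := Nat.mod_lt (r / p ^ u) hp
      unfold pbar pdigit
      omega
    calc digitComplement p r (u + 1) + r % p ^ (u + 1) + 1
        = (digitComplement p r u + r % p ^ u + 1)
            + (pbar p (pdigit p r u) + pdigit p r u) * p ^ u := by
          rw [digitComplement, Finset.sum_range_succ, Nat.mod_pow_succ, ← digitComplement]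
          unfold pdigit
          ring
      _ = p ^ u * (pbar p (pdigit p r u) + pdigit p r u + 1) := by rw [ih]; ring
      _ = p ^ (u + 1) := by rw [hdigit, pow_succ]

theorem digitComplement_lt (hp : 0 < p) (r u : ℕ) : digitComplement p r u < p ^ u :=
  digitComplement_add_mod_add_one hp r u ▸ Nat.lt_succ_of_le (Nat.le_add_right _ _)

theorem add_digitComplement_add_one (hp : 0 < p) (r u : ℕ) :
    r + digitComplement p r u + 1 = p ^ u * (r / p ^ u + 1) := by
  have hcompl := digitComplement_add_mod_add_one hp r u
  have hdiv := Nat.div_add_mod r (p ^ u)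
  generalize r % p ^ u = m at hcompl hdiv
  rw [Nat.mul_add_one]
  omega

theorem digitComplement_eq_of_dvd (hp : 0 < p) {r u c : ℕ} (hc : c < p ^ u)
    (hdvd : p ^ u ∣ r + c + 1) : digitComplement p r u = c := by
  have hS : p ^ u ∣ r + digitComplement p r u + 1 :=
    add_digitComplement_add_one hp r u ▸ dvd_mul_right _ _
  have hmod : r + digitComplement p r u + 1 ≡ r + c + 1 [MOD p ^ u] :=
    (Nat.modEq_zero_iff_dvd.2 hS).trans (Nat.modEq_zero_iff_dvd.2 hdvd).symm
  exact ((hmod.add_right_cancel' 1).add_left_cancel' r).eq_of_lt_of_lt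
    (digitComplement_lt hp r u) hc

theorem pow_succ_dvd_mul_add_pow_iff (hp : 0 < p) {u a q : ℕ} (ha : a ≠ 0) :
    p ^ (u + 1) ∣ p ^ u * (q + 1 + p ^ a) ↔ q % p = p - 1 := by
  rw [pow_succ, Nat.mul_dvd_mul_iff_left (pow_pos hp u), Nat.dvd_add_left (dvd_pow_self p ha),
    Nat.mod_eq_sub_iff Nat.one_pos hp]

theorem add_digitComplement_add_pow_add_one (hp : 0 < p) (r u a : ℕ) :
    r + (digitComplement p r u + p ^ (u + a)) + 1 = p ^ u * (r / p ^ u + 1 + p ^ a) :=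
  calc r + (digitComplement p r u + p ^ (u + a)) + 1
      = (r + digitComplement p r u + 1) + p ^ u * p ^ a := by ring
    _ = p ^ u * (r / p ^ u + 1 + p ^ a) := by rw [add_digitComplement_add_one hp]; ring

end

theorem first_subset_iff_condII_general (p l1 l2 : ℕ) (hp : p.Prime)
    (h12 : l2 < l1) :
    (∃ u a : ℕ, 1 ≤ a ∧ pdigit p (l1 - l2) u ≠ p - 1 ∧
        l2 = (∑ i ∈ Finset.range u, pbar p (pdigit p (l1 - l2) i) * p ^ i) + p ^ (u + a)) ↔
      CondII p l1 l2 := by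
  have hp0 := hp.pos
  obtain ⟨r, rfl⟩ := Nat.exists_eq_add_of_le' h12.le
  simp only [Nat.add_sub_cancel, ← digitComplement.eq_1]
  constructor
  · rintro ⟨u, a, ha, hdigit, rfl⟩
    have hfactor := add_digitComplement_add_pow_add_one hp0 r u a
    refine ⟨u, hfactor ▸ dvd_mul_right _ _, ?_, _, u + a, digitComplement_lt hp0 r u, by omega, rfl⟩
    rwa [hfactor, pow_succ_dvd_mul_add_pow_iff hp0 (by omega)]
  · rintro ⟨u, hdvd, hndvd, c, b, hc, hub, rfl⟩
    obtain ⟨a, rfl⟩ : ∃ a, b = u + (a + 1) := ⟨b - u - 1, by omega⟩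
    have hcompl : digitComplement p r u = c := by
      have hpow : p ^ u ∣ p ^ (u + (a + 1)) := pow_dvd_pow p (by omega)
      refine digitComplement_eq_of_dvd hp0 hc ((Nat.dvd_add_left hpow).1 ?_)
      rwa [show r + (c + p ^ (u + (a + 1))) + 1 = r + c + 1 + p ^ (u + (a + 1)) by ring] at hdvd
    subst hcompl
    refine ⟨u, a + 1, by omega, ?_, rfl⟩
    rwa [pdigit, Ne, ← pow_succ_dvd_mul_add_pow_iff hp0 a.succ_ne_zero,
      ← add_digitComplement_add_pow_add_one hp0]

theorem first_subset_iff_condII (p l1 l2 : ℕ) (hp : p.Prime)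
    (h12 : l2 < l1) (h2 : 1 ≤ l2) :
    (∃ u a : ℕ, 1 ≤ a ∧ pdigit p (l1 - l2) u ≠ p - 1 ∧
        l2 = (∑ i ∈ Finset.range u, pbar p (pdigit p (l1 - l2) i) * p ^ i) + p ^ (u + a)) ↔
      CondII p l1 l2 :=
  first_subset_iff_condII_general p l1 l2 hp h12
end

section
/- Let p be an odd prime and let λ_1 > λ_2 ≥ 1 be integers. Then pλ_2 ∈ Ψ_p(pλ_1 − pλ_2) if and only if p²λ_2 ∈ Ψ_p(p²λ_1 − p²λ_2). (This is the combinatorial content of Corollary 5.6(a): for a two-part partition λ, H^1(Σ_{pd}, S^{pλ}) ≅ H^1(Σ_{p²d}, S^{p²λ}).) -/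
/-- Erdmann's set `Ψ_p(r)`. -/
def Psi (p r : ℕ) : Set ℕ :=
  {m | ∃ u a : ℕ, 1 ≤ a ∧ pdigit p r u ≠ p - 1 ∧
        m = (∑ i ∈ Finset.range u, pbar p (pdigit p r i) * p ^ i) + p ^ (u + a)} ∪
  {m | ∃ u : ℕ, pdigit p r u ≠ p - 1 ∧
        m = ∑ i ∈ Finset.range (u + 1), pbar p (pdigit p r i) * p ^ i}

/-!
If `p ∣ r`, the lowest digit of `r` is `0`, so every element of `Ψ_p(r)` other than the pure
powers `p ^ a` (those with `u = 0`) has lowest digit `0̅ = p - 1` and is therefore prime to `p`.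
Hence for `p ∣ m` the condition `m ∈ Ψ_p(r)` just says that `m` is a power of `p`, and
`p * l₂` is a power of `p` iff `p² * l₂` is.
-/

open Finset

lemma pdigit_zero_of_dvd {p r : ℕ} (h : p ∣ r) : pdigit p r 0 = 0 := by
  simpa [pdigit] using Nat.mod_eq_zero_of_dvd h

lemma sum_range_succ_mul_pow_mod (p u : ℕ) (f : ℕ → ℕ) :
    (∑ i ∈ range (u + 1), f i * p ^ i) % p = f 0 % p := by
  rw [sum_range_succ', pow_zero, mul_one, Nat.add_mod]
  have hdvd : p ∣ ∑ i ∈ range u, f (i + 1) * p ^ (i + 1) :=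
    dvd_sum fun i _ => dvd_mul_of_dvd_right (dvd_pow_self p i.succ_ne_zero) _
  simp [Nat.mod_eq_zero_of_dvd hdvd]

lemma not_dvd_sum_pbar_pdigit {p r : ℕ} (hp : 2 ≤ p) (hr : p ∣ r) (u : ℕ) :
    ¬ p ∣ ∑ i ∈ range (u + 1), pbar p (pdigit p r i) * p ^ i := by
  rw [Nat.dvd_iff_mod_eq_zero, sum_range_succ_mul_pow_mod, pdigit_zero_of_dvd hr, pbar,
    Nat.mod_eq_of_lt (by omega)]
  omega

lemma mem_Psi_iff_exists_eq_pow_of_dvd {p r m : ℕ} (hp : 2 ≤ p) (hr : p ∣ r) (hm : p ∣ m) :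
    m ∈ Psi p r ↔ ∃ a, m = p ^ a := by
  constructor
  · rintro (⟨u, a, -, -, rfl⟩ | ⟨u, -, rfl⟩)
    · cases u with
      | zero => exact ⟨a, by simp⟩
      | succ v =>
        have hpow : p ∣ p ^ (v + 1 + a) := dvd_pow_self p (by omega)
        exact absurd ((Nat.dvd_add_left hpow).mp hm) (not_dvd_sum_pbar_pdigit hp hr v)
    · exact absurd hm (not_dvd_sum_pbar_pdigit hp hr u)
  · rintro ⟨a, rfl⟩
    have ha : a ≠ 0 := by
      rintro rfl
      exact absurd (Nat.le_of_dvd one_pos hm) (by omega)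
    refine Or.inl ⟨0, a, Nat.one_le_iff_ne_zero.mpr ha, ?_, by simp⟩
    rw [pdigit_zero_of_dvd hr]
    omega

lemma exists_mul_eq_pow_iff {p : ℕ} (hp : 0 < p) (x : ℕ) :
    (∃ a, p * x = p ^ a) ↔ ∃ a, x = p ^ a := by
  constructor
  · rintro ⟨_ | a, ha⟩
    · exact ⟨0, (Nat.eq_one_of_mul_eq_one_left ha).trans (pow_zero p).symm⟩
    · exact ⟨a, Nat.eq_of_mul_eq_mul_left hp (ha.trans (pow_succ' p a))⟩
  · rintro ⟨a, rfl⟩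
    exact ⟨a + 1, (pow_succ' p a).symm⟩

theorem mem_Psi_p_iff_p_sq_general (p l1 l2 : ℕ) (hp : p.Prime) :
    p * l2 ∈ Psi p (p * l1 - p * l2) ↔ p ^ 2 * l2 ∈ Psi p (p ^ 2 * l1 - p ^ 2 * l2) := by
  have hdvd_sq : p ∣ p ^ 2 := dvd_pow_self p two_ne_zero
  rw [mem_Psi_iff_exists_eq_pow_of_dvd hp.two_le
      (Nat.dvd_sub (dvd_mul_right p l1) (dvd_mul_right p l2)) (dvd_mul_right p l2),
    mem_Psi_iff_exists_eq_pow_of_dvd hp.two_le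
      (Nat.dvd_sub (hdvd_sq.mul_right l1) (hdvd_sq.mul_right l2)) (hdvd_sq.mul_right l2),
    sq, mul_assoc]
  exact (exists_mul_eq_pow_iff hp.pos _).symm

theorem mem_Psi_p_iff_p_sq (p l1 l2 : ℕ) (hp : p.Prime) (hodd : Odd p)
    (h12 : l2 < l1) (h2 : 1 ≤ l2) :
    p * l2 ∈ Psi p (p * l1 - p * l2) ↔ p ^ 2 * l2 ∈ Psi p (p ^ 2 * l1 - p ^ 2 * l2) :=
  mem_Psi_p_iff_p_sq_general p l1 l2 hp
end

section
/- Let p be an odd prime, let λ_1 > λ_2 ≥ 1 be integers, and let a be such that λ_1 + λ_2 < p^a. Then λ_2 ∈ Ψ_p(λ_1 − λ_2) if and only if λ_2 ∈ Ψ_p(λ_1 + p^a − λ_2). (This is the combinatorial content of Corollary 5.6(b): for a two-part partition λ of d < p^a, H^1(Σ_d, S^λ) ≅ H^1(Σ_{d+p^a}, S^{(λ_1+p^a, λ_2)}).) -/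
lemma pdigit_lt (p r i : ℕ) (hp : 0 < p) : pdigit p r i < p := Nat.mod_lt _ hp

lemma pbar_pos (p x : ℕ) (hp : 1 < p) (hx : x < p) (hne : x ≠ p - 1) : 1 ≤ pbar p x := by
  unfold pbar
  omega

/-- If two numbers have the same base-`p` digits below `a`, membership of `m < p^a`
in `Psi` transfers. -/
lemma psi_transfer (p a m r r' : ℕ) (hp : 1 < p)
    (hdig : ∀ i < a, pdigit p r i = pdigit p r' i) (hm : m < p ^ a)
    (h : m ∈ Psi p r) : m ∈ Psi p r' := by
  rcases h with ⟨u, b, hb, hu, hsum⟩ | ⟨u, hu, hsum⟩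
  · have hpb : p ^ (u + b) ≤ m := by
      rw [hsum]; exact Nat.le_add_left _ _
    have hub : u + b < a := by
      by_contra hc
      push_neg at hc
      exact absurd (lt_of_le_of_lt hpb hm) (not_lt.2 (Nat.pow_le_pow_right (le_of_lt hp) hc))
    have hua : u < a := by omega
    left
    refine ⟨u, b, hb, ?_, ?_⟩
    · rw [← hdig u hua]; exact hu
    · rw [hsum]
      congr 1
      apply Finset.sum_congr rfl
      intro i hi
      rw [hdig i (lt_trans (Finset.mem_range.mp hi) hua)]
  · have hterm : pbar p (pdigit p r u) * p ^ u ≤ m := by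
      rw [hsum]
      exact Finset.single_le_sum (f := fun i => pbar p (pdigit p r i) * p ^ i)
        (fun i _ => Nat.zero_le _) (Finset.self_mem_range_succ u)
    have h1 : 1 ≤ pbar p (pdigit p r u) :=
      pbar_pos p _ hp (pdigit_lt p r u (lt_trans one_pos hp)) hu
    have hpu : p ^ u ≤ m := le_trans (Nat.le_mul_of_pos_left _ h1) hterm
    have hua : u < a := by
      by_contra hc
      push_neg at hc
      exact absurd (lt_of_le_of_lt hpu hm) (not_lt.2 (Nat.pow_le_pow_right (le_of_lt hp) hc))
    right
    refine ⟨u, ?_, ?_⟩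
    · rw [← hdig u hua]; exact hu
    · rw [hsum]
      apply Finset.sum_congr rfl
      intro i hi
      rw [hdig i (lt_of_lt_of_le (Finset.mem_range.mp hi) hua)]

lemma pdigit_add_pow (p r a i : ℕ) (hp : 1 < p) (hi : i < a) :
    pdigit p (r + p ^ a) i = pdigit p r i := by
  unfold pdigit
  have h : r + p ^ a = r + p ^ (a - i) * p ^ i := by
    rw [← pow_add, Nat.sub_add_cancel hi.le]
  rw [h, Nat.add_mul_div_right _ _ (pow_pos (lt_trans one_pos hp) i)]
  obtain ⟨k, hk⟩ : p ∣ p ^ (a - i) := dvd_pow_self p (by omega)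
  rw [hk, mul_comm p k, Nat.add_mul_mod_self_right]

theorem mem_Psi_iff_add_p_pow (p l1 l2 a : ℕ) (hp : p.Prime) (hodd : Odd p)
    (h12 : l2 < l1) (h2 : 1 ≤ l2) (ha : l1 + l2 < p ^ a) :
    l2 ∈ Psi p (l1 - l2) ↔ l2 ∈ Psi p (l1 + p ^ a - l2) := by
  have hp1 : 1 < p := hp.one_lt
  have hr' : l1 + p ^ a - l2 = (l1 - l2) + p ^ a := by omega
  have hl2 : l2 < p ^ a := by omega
  have hdig : ∀ i < a, pdigit p (l1 - l2) i = pdigit p (l1 + p ^ a - l2) i := by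
    intro i hi
    rw [hr', pdigit_add_pow p _ a i hp1 hi]
  constructor
  · exact psi_transfer p a l2 _ _ hp1 hdig hl2
  · exact psi_transfer p a l2 _ _ hp1 (fun i hi => (hdig i hi).symm) hl2
end

section
/- Let p ≥ 3 be a prime and d ≥ 1. Let λ be a partition of p²d with at most n parts satisfying the Doty digit condition, and suppose not every part of λ is divisible by p. Let μ be a partition of d with at most n parts, set p²μ := (p²μ_1, …, p²μ_n) (a partition of p²d), and assume λ strictly dominates p²μ. Then there exists 1 ≤ i < n such that (λ_i − p²μ_i) − (λ_{i+1} − p²μ_{i+1}) ≥ p². (Lemma 6.2: the weight λ − p²μ pairs with some simple coroot of GL_n to at least p².) -/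
/-- For a Doty partition, the residues mod `p^2` are weakly decreasing. -/
lemma doty_mod_sq_antitone (p : ℕ) (hp0 : 0 < p) (l : ℕ → ℕ) (hD : DotyCondition p l)
    {i i' : ℕ} (h : i < i') : l i' % p ^ 2 ≤ l i % p ^ 2 := by
  have h0 := hD i 0 i' h
  have h1 := hD i 1 i' h
  simp only [pow_zero, Nat.div_one, pow_one] at h0 h1
  have e : ∀ m : ℕ, m % p ^ 2 = m % p + p * (m / p % p) := by
    intro m; rw [sq, Nat.mod_mul]
  rw [e, e]
  have ha : l i % p < p := Nat.mod_lt _ hp0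
  have hb : l i / p % p < p := Nat.mod_lt _ hp0
  have ha' : l i' % p < p := Nat.mod_lt _ hp0
  have hb' : l i' / p % p < p := Nat.mod_lt _ hp0
  by_cases hB : l i / p % p = p - 1
  · by_cases hA : l i % p = p - 1
    · rw [hA, hB]
      have : l i' / p % p ≤ p - 1 := by omega
      have : p * (l i' / p % p) ≤ p * (p - 1) := Nat.mul_le_mul_left _ this
      omega
    · rw [h0 hA, hB]
      have : l i' / p % p ≤ p - 1 := by omega
      have : p * (l i' / p % p) ≤ p * (p - 1) := Nat.mul_le_mul_left _ this
      omega
  · rw [h1 hB]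
    by_cases hA : l i % p = p - 1
    · have : l i' % p ≤ p - 1 := by omega
      omega
    · rw [h0 hA]
      omega

theorem pairing_with_simple_coroot_ge_p_sq
    (p n d : ℕ) (hp : p.Prime) (hp3 : 3 ≤ p) (hd : 1 ≤ d)
    (lam : ℕ → ℕ) (hlam : IsPartition n (p ^ 2 * d) lam) (hD : DotyCondition p lam)
    (hnotall : ¬ ∀ i, p ∣ lam i)
    (mu : ℕ → ℕ) (hmu : IsPartition n d mu)
    (hdom : Dominates lam (fun i => p ^ 2 * mu i))
    (hne : lam ≠ fun i => p ^ 2 * mu i) :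
    ∃ i : ℕ, i + 1 < n ∧
      (p ^ 2 : ℤ) ≤ ((lam i : ℤ) - p ^ 2 * mu i) - ((lam (i + 1) : ℤ) - p ^ 2 * mu (i + 1)) := by
  classical
  by_contra hcon
  push_neg at hcon
  obtain ⟨hanti, hvan, hsum⟩ := hlam
  obtain ⟨hanti', hvan', hsum'⟩ := hmu
  have hp0 : 0 < p := hp.pos
  have hPpos : 0 < p ^ 2 := pow_pos hp0 2
  have hPZ : (0 : ℤ) < (p : ℤ) ^ 2 := by positivity
  -- the div and mod parts
  set u : ℕ → ℤ := fun i => ((lam i / p ^ 2 : ℕ) : ℤ) - (mu i : ℤ) with hu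
  set c : ℕ → ℤ := fun i => ((lam i % p ^ 2 : ℕ) : ℤ) with hc
  have hdecomp : ∀ i : ℕ, (lam i : ℤ) - (p : ℤ) ^ 2 * mu i = (p : ℤ) ^ 2 * u i + c i := by
    intro i
    have := Nat.div_add_mod (lam i) (p ^ 2)
    have h2 : ((p ^ 2 * (lam i / p ^ 2) + lam i % p ^ 2 : ℕ) : ℤ) = (lam i : ℤ) := by
      rw [this]
    push_cast at h2
    simp only [hu, hc]
    push_cast
    linarith
  have hc0 : ∀ i, 0 ≤ c i := fun i => Int.natCast_nonneg _
  have hcP : ∀ i, c i ≤ (p : ℤ) ^ 2 - 1 := by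
    intro i
    have : lam i % p ^ 2 < p ^ 2 := Nat.mod_lt _ hPpos
    have : ((lam i % p ^ 2 : ℕ) : ℤ) < ((p ^ 2 : ℕ) : ℤ) := by exact_mod_cast this
    simp only [hc]
    push_cast at this ⊢
    linarith
  have hcmono : ∀ i, c (i + 1) ≤ c i := by
    intro i
    simp only [hc]
    exact_mod_cast doty_mod_sq_antitone p hp0 lam hD (Nat.lt_succ_self i)
  -- monotonicity of u
  have humono : ∀ i, i + 1 < n → u i ≤ u (i + 1) := by
    intro i hi
    have h := hcon i hi
    rw [hdecomp i, hdecomp (i + 1)] at h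
    have hcc := hcmono i
    have hmul : (p : ℤ) ^ 2 * (u i - u (i + 1)) < (p : ℤ) ^ 2 * 1 := by linarith
    have := lt_of_mul_lt_mul_left hmul (le_of_lt hPZ)
    linarith
  have hchain : ∀ i, i < n → u 0 ≤ u i := by
    intro i
    induction i with
    | zero => intro _; exact le_refl _
    | succ k ih =>
      intro h
      exact (ih (by omega)).trans (humono k h)
  -- total sum is zero
  have hsum0 : ∑ i ∈ Finset.range n, ((p : ℤ) ^ 2 * u i + c i) = 0 := by
    have : ∑ i ∈ Finset.range n, ((p : ℤ) ^ 2 * u i + c i)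
        = ∑ i ∈ Finset.range n, ((lam i : ℤ) - (p : ℤ) ^ 2 * mu i) :=
      Finset.sum_congr rfl fun i _ => (hdecomp i).symm
    rw [this, Finset.sum_sub_distrib, ← Finset.mul_sum]
    have h1 : ((∑ i ∈ Finset.range n, lam i : ℕ) : ℤ) = ((p ^ 2 * d : ℕ) : ℤ) := by
      rw [hsum]
    have h2 : ((∑ i ∈ Finset.range n, mu i : ℕ) : ℤ) = ((d : ℕ) : ℤ) := by rw [hsum']
    push_cast at h1 h2
    rw [h2] at *
    push_cast
    linarith
  -- sum of residues is at least 1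
  obtain ⟨i0, hi0⟩ := not_forall.mp hnotall
  have hi0n : i0 < n := by
    by_contra h
    exact hi0 (by rw [hvan i0 (by omega)]; exact dvd_zero p)
  have hci0 : 1 ≤ c i0 := by
    have : lam i0 % p ^ 2 ≠ 0 := by
      intro h
      exact hi0 ((dvd_pow_self p two_ne_zero).trans (Nat.dvd_of_mod_eq_zero h))
    have h1 : 1 ≤ lam i0 % p ^ 2 := Nat.one_le_iff_ne_zero.mpr this
    simp only [hc]
    exact_mod_cast h1
  have hcsum : 1 ≤ ∑ i ∈ Finset.range n, c i := by
    calc (1 : ℤ) ≤ c i0 := hci0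
    _ ≤ ∑ i ∈ Finset.range n, c i :=
        Finset.single_le_sum (fun i _ => hc0 i) (Finset.mem_range.mpr hi0n)
  -- hence sum of u is at most -1
  have hPu : (p : ℤ) ^ 2 * ∑ i ∈ Finset.range n, u i ≤ -1 := by
    rw [Finset.mul_sum]
    have := Finset.sum_add_distrib (s := Finset.range n)
      (f := fun i => (p : ℤ) ^ 2 * u i) (g := c)
    rw [this] at hsum0
    linarith
  have husum : ∑ i ∈ Finset.range n, u i ≤ -1 := by
    by_contra h
    push_neg at h
    have h' : 0 ≤ ∑ i ∈ Finset.range n, u i := by linarith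
    nlinarith
  -- hence u 0 ≤ -1
  have hnu0 : (n : ℤ) * u 0 ≤ ∑ i ∈ Finset.range n, u i := by
    have := Finset.card_nsmul_le_sum (Finset.range n) u (u 0)
      (fun i hi => hchain i (Finset.mem_range.mp hi))
    simpa [nsmul_eq_mul] using this
  have hn1 : 1 ≤ n := by omega
  have hu0 : u 0 ≤ -1 := by
    by_contra h
    push_neg at h
    have h' : 0 ≤ u 0 := by linarith
    have : (0 : ℤ) ≤ (n : ℤ) * u 0 := mul_nonneg (by exact_mod_cast Nat.zero_le n) h'
    linarith
  -- but dominance at k = 1 gives nu 0 ≥ 0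
  have hdom1 : (p : ℤ) ^ 2 * mu 0 ≤ (lam 0 : ℤ) := by
    have := hdom 1
    simp only [Finset.range_one, Finset.sum_singleton] at this
    exact_mod_cast this
  have hfinal := hdecomp 0
  have hPu0 : (p : ℤ) ^ 2 * u 0 ≤ (p : ℤ) ^ 2 * (-1) :=
    mul_le_mul_of_nonneg_left hu0 (le_of_lt hPZ)
  have := hcP 0
  linarith
end

section
/- Let p ≥ 3 be a prime and d ≥ 1. Let λ be a partition of p²d with at most n parts satisfying the Doty digit condition, with not every part of λ divisible by p; let μ be a partition of d with at most n parts such that λ strictly dominates p²μ := (p²μ_1, …, p²μ_n). Set γ := λ − p²μ − (p−1)ρ ∈ ℤ^n. Then there exists 1 ≤ i < n with ⟨(p−1)ρ − γ, α_i^∨⟩ < 0, i.e., γ_i − γ_{i+1} > p − 1. (This is the inequality proved in Corollary 6.3, showing γ cannot be a weight of the Steinberg module St_1.) -/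
/-!
Write `λ_i = p² q_i + r_i` with `0 ≤ r_i < p²`. The Doty condition compares the base-`p` digits of
consecutive parts, so the residues `r_i` are weakly decreasing. If every `γ_i - γ_{i+1}` were at
most `p - 1`, then `λ_i - λ_{i+1} ≤ p² (μ_i - μ_{i+1}) + 2 (p - 1)`, and since `2 (p - 1) < p²`
this forces `q_i - q_{i+1} ≤ μ_i - μ_{i+1}`: the differences `μ_i - q_i` decrease, and dominance
in the first part gives `μ_0 ≤ q_0`. Hence `μ ≤ q` entrywise, and
`p² d = p² Σ μ ≤ p² Σ q < Σ λ = p² d`, the strict inequality because some `r_i` is nonzero.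
-/

open Finset

theorem Nat.mod_pow_le_mod_pow_of_digit_le {b x y : ℕ}
    (h : ∀ j, y / b ^ j % b ≤ x / b ^ j % b) (k : ℕ) : y % b ^ k ≤ x % b ^ k := by
  induction k with
  | zero => simp [Nat.mod_one]
  | succ k ih =>
    rw [Nat.mod_pow_succ, Nat.mod_pow_succ]
    exact add_le_add ih (Nat.mul_le_mul_left _ (h k))

theorem DotyCondition.digit_le {p : ℕ} {l : ℕ → ℕ} (hD : DotyCondition p l) (hp : 0 < p)
    {i i' : ℕ} (hii' : i < i') (j : ℕ) : l i' / p ^ j % p ≤ l i / p ^ j % p := by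
  by_cases hmax : l i / p ^ j % p = p - 1
  · have := Nat.mod_lt (l i' / p ^ j) hp
    omega
  · simp [hD i j i' hii' hmax]

theorem DotyCondition.antitone_mod_pow {p : ℕ} {l : ℕ → ℕ} (hD : DotyCondition p l)
    (hp : 0 < p) (k : ℕ) : Antitone fun i => l i % p ^ k :=
  antitone_nat_of_succ_le fun i =>
    Nat.mod_pow_le_mod_pow_of_digit_le (hD.digit_le hp i.lt_succ_self) k

theorem Int.le_of_mul_le_mul_add_of_lt {N r a b : ℤ} (hN : 0 ≤ N) (hr : r < N)
    (h : N * a ≤ N * b + r) : a ≤ b := by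
  by_contra! hab
  nlinarith

theorem le_div_of_sub_le_mul_sub_add {N n : ℕ} {r : ℤ} {lam mu : ℕ → ℕ} (hN : 0 < N)
    (hr : r < N) (hres : Antitone fun i => lam i % N) (h0 : N * mu 0 ≤ lam 0)
    (hgap : ∀ i, i + 1 < n →
      (lam i : ℤ) - lam (i + 1) ≤ N * ((mu i : ℤ) - mu (i + 1)) + r) :
    ∀ i < n, mu i ≤ lam i / N := by
  have hdecomp (i : ℕ) : (lam i : ℤ) = N * (lam i / N : ℕ) + (lam i % N : ℕ) := by
    exact_mod_cast (Nat.div_add_mod (lam i) N).symm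
  have hstep (i : ℕ) (hi : i + 1 < n) :
      (mu (i + 1) : ℤ) - (lam (i + 1) / N : ℕ) ≤ (mu i : ℤ) - (lam i / N : ℕ) := by
    have hr_le : ((lam (i + 1) % N : ℕ) : ℤ) ≤ (lam i % N : ℕ) := by
      exact_mod_cast hres i.le_succ
    have : ((lam i / N : ℕ) : ℤ) - (lam (i + 1) / N : ℕ) ≤ (mu i : ℤ) - mu (i + 1) := by
      refine Int.le_of_mul_le_mul_add_of_lt (Int.natCast_nonneg N) hr ?_
      have := hgap i hi
      rw [hdecomp i, hdecomp (i + 1)] at this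
      linarith
    linarith
  intro i hi
  suffices (mu i : ℤ) - (lam i / N : ℕ) ≤ 0 by omega
  induction i with
  | zero =>
    have : mu 0 ≤ lam 0 / N := (Nat.le_div_iff_mul_le hN).mpr (by linarith)
    omega
  | succ i ih => exact (hstep i hi).trans (ih (by omega))

theorem mul_sum_lt_sum_of_le_div {ι : Type*} {s : Finset ι} {N : ℕ} {lam mu : ι → ℕ}
    (hle : ∀ i ∈ s, mu i ≤ lam i / N) (hrem : ∃ i ∈ s, lam i % N ≠ 0) :
    N * ∑ i ∈ s, mu i < ∑ i ∈ s, lam i := by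
  obtain ⟨i, hi, hrem⟩ := hrem
  calc N * ∑ i ∈ s, mu i
      ≤ N * ∑ i ∈ s, lam i / N := Nat.mul_le_mul_left N (sum_le_sum hle)
    _ < N * ∑ i ∈ s, lam i / N + ∑ i ∈ s, lam i % N := by
      have := single_le_sum (fun j _ => Nat.zero_le (lam j % N)) hi
      omega
    _ = ∑ i ∈ s, lam i := by
      rw [mul_sum, ← sum_add_distrib]
      exact sum_congr rfl fun j _ => Nat.div_add_mod (lam j) N

theorem gamma_not_weight_of_steinberg_general
    (p n d : ℕ) (hp : p.Prime)
    (lam : ℕ → ℕ) (hlam : IsPartition n (p ^ 2 * d) lam) (hD : DotyCondition p lam)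
    (hnotall : ¬ ∀ i, p ∣ lam i)
    (mu : ℕ → ℕ) (hmu : IsPartition n d mu)
    (hdom : Dominates lam (fun i => p ^ 2 * mu i))
    -- `γ := λ - p²μ - (p-1)ρ` where `ρ i = n - 1 - i` (0-based indexing)
    (gamma : ℕ → ℤ)
    (hgamma : ∀ i, gamma i =
      (lam i : ℤ) - p ^ 2 * mu i - (p - 1) * ((n : ℤ) - 1 - (i : ℤ))) :
    ∃ i : ℕ, i + 1 < n ∧ (p - 1 : ℤ) < gamma i - gamma (i + 1) := by
  by_contra! hcon
  have hgap (i : ℕ) (hi : i + 1 < n) : (lam i : ℤ) - lam (i + 1) ≤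
      ((p ^ 2 : ℕ) : ℤ) * ((mu i : ℤ) - mu (i + 1)) + 2 * (p - 1) := by
    have := hcon i hi
    rw [hgamma, hgamma] at this
    push_cast at this ⊢
    linarith
  have hslack : 2 * ((p : ℤ) - 1) < ((p ^ 2 : ℕ) : ℤ) := by
    push_cast
    nlinarith
  have hle := le_div_of_sub_le_mul_sub_add (pow_pos hp.pos 2) hslack
    (hD.antitone_mod_pow hp.pos 2) (by simpa using hdom 1) hgap
  obtain ⟨i, hi⟩ := not_forall.mp hnotall
  have hin : i < n := by
    by_contra! hni
    exact hi (hlam.2.1 i hni ▸ dvd_zero p)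
  have hrem : lam i % p ^ 2 ≠ 0 := fun h =>
    hi ((dvd_pow_self p two_ne_zero).trans (Nat.dvd_of_mod_eq_zero h))
  have := mul_sum_lt_sum_of_le_div (s := range n) (fun j hj => hle j (mem_range.mp hj))
    ⟨i, mem_range.mpr hin, hrem⟩
  rw [hmu.2.2, hlam.2.2] at this
  exact lt_irrefl _ this

theorem gamma_not_weight_of_steinberg
    (p n d : ℕ) (hp : p.Prime) (hp3 : 3 ≤ p) (hd : 1 ≤ d)
    (lam : ℕ → ℕ) (hlam : IsPartition n (p ^ 2 * d) lam) (hD : DotyCondition p lam)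
    (hnotall : ¬ ∀ i, p ∣ lam i)
    (mu : ℕ → ℕ) (hmu : IsPartition n d mu)
    (hdom : Dominates lam (fun i => p ^ 2 * mu i))
    (hne : lam ≠ fun i => p ^ 2 * mu i)
    -- `γ := λ - p²μ - (p-1)ρ` where `ρ i = n - 1 - i` (0-based indexing)
    (gamma : ℕ → ℤ)
    (hgamma : ∀ i, gamma i =
      (lam i : ℤ) - p ^ 2 * mu i - (p - 1) * ((n : ℤ) - 1 - (i : ℤ))) :
    ∃ i : ℕ, i + 1 < n ∧ (p - 1 : ℤ) < gamma i - gamma (i + 1) :=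
  gamma_not_weight_of_steinberg_general p n d hp lam hlam hD hnotall mu hmu hdom gamma hgamma
end

section
/- Let p ≥ 3 be a prime, d ≥ 1, and r with p^r > d. Let μ be a partition of d + p^r with at most n parts satisfying the Doty digit condition, and suppose μ_1 ≥ p^r. Then μ_1 − μ_2 ≥ p^r, and (μ_1 − p^r, μ_2, …, μ_n) is a partition of d with at most n parts satisfying the Doty digit condition. (This is the combinatorial heart of Lemma 7.5: every composition factor L(μ) of H^0(d + p^r) with μ_1 ≥ p^r has the form L(μ̃ + p^r) for a composition factor L(μ̃) of H^0(d).) -/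
open Finset

def subFirstPart (k : ℕ) (l : ℕ → ℕ) : ℕ → ℕ := fun i => if i = 0 then l 0 - k else l i

namespace Nat

theorem mod_pow_le_mod_pow_of_forall_digit_le {p x y r : ℕ}
    (h : ∀ j < r, y / p ^ j % p ≤ x / p ^ j % p) : y % p ^ r ≤ x % p ^ r := by
  induction r with
  | zero => simp [mod_one]
  | succ r ih =>
    have hlow := ih fun j hj => h j (by omega)
    have hdigit := Nat.mul_le_mul_left (p ^ r) (h r r.lt_succ_self)
    rw [mod_pow_succ, mod_pow_succ]
    omega

theorem div_pow_mod_sub_pow_of_lt {p j r x : ℕ} (hj : j < r) (hx : p ^ r ≤ x) :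
    (x - p ^ r) / p ^ j % p = x / p ^ j % p := by
  have hmod : (x - p ^ r) % p ^ (j + 1) = x % p ^ (j + 1) :=
    (modEq_iff_dvd' (sub_le x (p ^ r))).mpr
      (by rw [Nat.sub_sub_self hx]; exact pow_dvd_pow p hj)
  rw [← mod_mul_right_div_self, ← mod_mul_right_div_self, ← pow_succ, hmod]

theorem mod_add_le_of_le {x m : ℕ} (hm : m ≤ x) : x % m + m ≤ x := by
  rcases m.eq_zero_or_pos with rfl | hm0
  · simp
  have hq : 1 ≤ x / m := (one_le_div_iff hm0).mpr hm
  have := mod_add_div x m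
  have := Nat.mul_le_mul_left m hq
  omega

end Nat

namespace IsPartition

variable {n d : ℕ} {l : ℕ → ℕ}

theorem sum_range_le (h : IsPartition n d l) (k : ℕ) : ∑ i ∈ range k, l i ≤ d := by
  obtain ⟨-, hzero, hsum⟩ := h
  have hext : ∑ i ∈ range n, l i = ∑ i ∈ range (max k n), l i :=
    sum_subset (range_subset_range.mpr (le_max_right k n))
      fun i _ hi => hzero i (by simpa using hi)
  calc ∑ i ∈ range k, l i ≤ ∑ i ∈ range (max k n), l i :=
        sum_le_sum_of_subset (range_subset_range.mpr (le_max_left k n))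
    _ = d := hext ▸ hsum

theorem subFirstPart {k : ℕ} (h : IsPartition n (d + k) l) (hk : l 1 + k ≤ l 0) :
    IsPartition n d (subFirstPart k l) := by
  obtain ⟨hmono, hzero, hsum⟩ := h
  have htail (i : ℕ) : _root_.subFirstPart k l (i + 1) = l (i + 1) := if_neg i.succ_ne_zero
  refine ⟨antitone_nat_of_succ_le fun i => ?_, fun i hi => ?_, ?_⟩
  · rcases i with _ | i
    · show l 1 ≤ l 0 - k
      omega
    · rw [htail, htail]
      exact hmono (i + 1).le_succ
  · rcases i with _ | i
    · have := hzero 0 hi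
      show l 0 - k = 0
      omega
    · rw [htail]
      exact hzero _ hi
  · rcases n with _ | n
    · rw [sum_range_zero] at hsum ⊢
      omega
    · rw [sum_range_succ'] at hsum ⊢
      simp only [htail]
      show _ + (l 0 - k) = d
      omega

end IsPartition

namespace DotyCondition

variable {p : ℕ} {l : ℕ → ℕ}

theorem digit_le_s14 (h : DotyCondition p l) (hp : 0 < p) {i i' : ℕ} (hi : i < i') (j : ℕ) :
    l i' / p ^ j % p ≤ l i / p ^ j % p := by
  by_cases hdigit : l i / p ^ j % p = p - 1
  · have := Nat.mod_lt (l i' / p ^ j) hp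
    omega
  · simp [h i j i' hi hdigit]

theorem subFirstPart (h : DotyCondition p l) (hp : 0 < p) {r : ℕ} (hr : p ^ r ≤ l 0)
    (hsmall : ∀ i, 0 < i → l i < p ^ r) : DotyCondition p (subFirstPart (p ^ r) l) := by
  intro i j i' hi hdigit
  simp only [_root_.subFirstPart, if_neg (show i' ≠ 0 by omega)] at hdigit ⊢
  rcases Nat.eq_zero_or_pos i with rfl | hi0
  · rcases lt_or_ge j r with hj | hj
    · rw [if_pos rfl, Nat.div_pow_mod_sub_pow_of_lt hj hr] at hdigit
      exact h 0 j i' hi hdigit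
    · have : l i' < p ^ j := (hsmall i' hi).trans_le (Nat.pow_le_pow_right hp hj)
      simp [Nat.div_eq_of_lt this]
  · rw [if_neg hi0.ne'] at hdigit
    exact h i j i' hi hdigit

end DotyCondition

theorem mu_large_first_part_comes_from_smaller_symmetric_power_general
    (p n d r : ℕ) (hp : p.Prime) (hr : d < p ^ r)
    (mu : ℕ → ℕ) (hmu : IsPartition n (d + p ^ r) mu) (hD : DotyCondition p mu)
    (h1 : p ^ r ≤ mu 0) :
    mu 1 + p ^ r ≤ mu 0 ∧
      IsPartition n d (fun i => if i = 0 then mu 0 - p ^ r else mu i) ∧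
      DotyCondition p (fun i => if i = 0 then mu 0 - p ^ r else mu i) := by
  have hmu1 : mu 1 < p ^ r := by
    have := hmu.sum_range_le 2
    simp only [sum_range_succ, range_zero, sum_empty] at this
    omega
  have hsmall : ∀ i, 0 < i → mu i < p ^ r := fun i hi => (hmu.1 hi).trans_lt hmu1
  have hmod : mu 1 ≤ mu 0 % p ^ r := calc
    mu 1 = mu 1 % p ^ r := (Nat.mod_eq_of_lt hmu1).symm
    _ ≤ mu 0 % p ^ r :=
      Nat.mod_pow_le_mod_pow_of_forall_digit_le fun j _ => hD.digit_le_s14 hp.pos one_pos j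
  have hgap : mu 1 + p ^ r ≤ mu 0 :=
    (Nat.add_le_add_right hmod _).trans (Nat.mod_add_le_of_le h1)
  exact ⟨hgap, hmu.subFirstPart hgap, hD.subFirstPart hp.pos h1 hsmall⟩

theorem mu_large_first_part_comes_from_smaller_symmetric_power
    (p n d r : ℕ) (hp : p.Prime) (hp3 : 3 ≤ p) (hd : 1 ≤ d) (hr : d < p ^ r)
    (mu : ℕ → ℕ) (hmu : IsPartition n (d + p ^ r) mu) (hD : DotyCondition p mu)
    (h1 : p ^ r ≤ mu 0) :
    mu 1 + p ^ r ≤ mu 0 ∧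
      IsPartition n d (fun i => if i = 0 then mu 0 - p ^ r else mu i) ∧
      DotyCondition p (fun i => if i = 0 then mu 0 - p ^ r else mu i) :=
  mu_large_first_part_comes_from_smaller_symmetric_power_general p n d r hp hr mu hmu hD h1
end
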